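/- arXiv:2512.19044 — 9 statements merged into one kernel-verified Lean document; each statement's English description precedes it below -/
import Mathlib

section
/- Let H be a graph and let 𝐇 be a family of connected subgraphs (regions) of H such that the union of any two members of 𝐇 is acyclic (𝐇 is 2-acyclic). If all members of 𝐇 share a common vertex, then the union of all members of 𝐇 is a tree. -/
/-!
Fix a common vertex `t`. By 2-acyclicity, the distance to `t` of a vertex `a` is the same in
every region containing `a` and in the forest `F i ⊔ F j` for any region `F i` containing it,
so it is a well-defined height on the union. In such a forest adjacent vertices have different
heights and a vertex has at most one lower neighbour; hence a vertex of maximal height on a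
cycle of the union cannot exist.
-/

open SimpleGraph

namespace SimpleGraph

variable {V V' : Type*} {G : SimpleGraph V} {G' : SimpleGraph V'} {t u v : V}

/-- A vertex of maximal rank on a cycle would have two lower neighbours on it. -/
lemma isAcyclic_of_unique_lower_neighbor {α : Type*} [LinearOrder α] (f : V → α)
    (hne : ∀ ⦃a b⦄, G.Adj a b → f a ≠ f b)
    (hlower : ∀ ⦃a b c⦄, G.Adj a b → G.Adj a c → f b < f a → f c < f a → b = c) :
    G.IsAcyclic := by
  classical
  intro v c hc
  obtain ⟨x, hx, hmax⟩ := c.support.toFinset.exists_max_image f ⟨v, by simp⟩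
  rw [List.mem_toFinset] at hx
  set d := c.rotate x hx
  have hd : d.IsCycle := hc.rotate hx
  have hlt : ∀ y ∈ d.support, G.Adj x y → f y < f x := fun y hy hxy =>
    (hmax y (by simpa [d] using hy)).lt_of_ne (hne hxy).symm
  exact hd.snd_ne_penultimate <|
    hlower (d.adj_snd hd.not_nil) (d.adj_penultimate hd.not_nil).symm
      (hlt _ (d.getVert_mem_support 1) (d.adj_snd hd.not_nil))
      (hlt _ (d.getVert_mem_support _) (d.adj_penultimate hd.not_nil).symm)

lemma IsAcyclic.length_eq_dist (hG : G.IsAcyclic) {p : G.Walk u v} (hp : p.IsPath) :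
    p.length = G.dist u v := by
  obtain ⟨q, hq, hql⟩ := p.reachable.exists_path_of_dist
  have hpq : p = q := congrArg Subtype.val ((hG.subsingleton_path u v).elim ⟨p, hp⟩ ⟨q, hq⟩)
  rw [hpq, hql]

lemma IsAcyclic.dist_map_of_injective (hG' : G'.IsAcyclic) (φ : G →g G')
    (hφ : Function.Injective φ) (h : G.Reachable u v) : G'.dist (φ u) (φ v) = G.dist u v := by
  obtain ⟨p, hp, hpl⟩ := h.exists_path_of_dist
  rw [← hpl, ← p.length_map φ, hG'.length_eq_dist (hp.map hφ)]

lemma IsAcyclic.eq_of_adj_of_dist_lt (hG : G.IsAcyclic) {a b c : V} (hab : G.Adj a b)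
    (hac : G.Adj a c) (hb : G.dist t b < G.dist t a) (hc : G.dist t c < G.dist t a) : b = c := by
  have hr : G.Reachable t a := Reachable.of_dist_ne_zero (by omega)
  have hb' := hG.dist_eq_dist_add_one_of_adj_of_reachable t hab hr
  have hc' := hG.dist_eq_dist_add_one_of_adj_of_reachable t hac hr
  obtain ⟨p, hp⟩ := (hr.trans hab.reachable).exists_walk_length_eq_dist
  obtain ⟨q, hq⟩ := (hr.trans hac.reachable).exists_walk_length_eq_dist
  have hp' : (p.concat hab.symm).IsPath := Walk.isPath_of_length_eq_dist _ (by simp; omega)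
  have hq' : (q.concat hac.symm).IsPath := Walk.isPath_of_length_eq_dist _ (by simp; omega)
  have hpq := (hG.subsingleton_path t a).elim ⟨_, hp'⟩ ⟨_, hq'⟩
  simpa using congrArg (fun r : G.Path t a => r.1.penultimate) hpq

namespace Subgraph

variable {W ι : Type*} {H : SimpleGraph W} {F : ι → H.Subgraph} {t : W}

lemma coe_dist_eq_of_le {A K : H.Subgraph} (hAK : A ≤ K) (hK : K.coe.IsAcyclic)
    (hA : A.Connected) {u v : W} (hu : u ∈ A.verts) (hv : v ∈ A.verts) :
    K.coe.dist ⟨u, hAK.1 hu⟩ ⟨v, hAK.1 hv⟩ = A.coe.dist ⟨u, hu⟩ ⟨v, hv⟩ :=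
  hK.dist_map_of_injective _ (inclusion.injective hAK) (hA ⟨u, hu⟩ ⟨v, hv⟩)

lemma connected_iSup [Nonempty ι] (hconn : ∀ i, (F i).Connected)
    (ht : ∀ i, t ∈ (F i).verts) : (⨆ i, F i).Connected := by
  have htU : t ∈ (⨆ i, F i).verts := by
    simpa using ⟨Classical.arbitrary ι, ht _⟩
  rw [Subgraph.connected_iff', connected_iff_exists_forall_reachable]
  refine ⟨⟨t, htU⟩, fun ⟨v, hv⟩ => ?_⟩
  obtain ⟨i, hvi⟩ : ∃ i, v ∈ (F i).verts := by simpa using hv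
  exact (hconn i ⟨t, ht i⟩ ⟨v, hvi⟩).map (inclusion (le_iSup F i))

lemma coe_dist_eq_of_mem_of_mem (hconn : ∀ i, (F i).Connected)
    (h2 : ∀ i j, (F i ⊔ F j).coe.IsAcyclic) (ht : ∀ i, t ∈ (F i).verts) {a : W} {i j : ι}
    (hi : a ∈ (F i).verts) (hj : a ∈ (F j).verts) :
    (F i).coe.dist ⟨t, ht i⟩ ⟨a, hi⟩ = (F j).coe.dist ⟨t, ht j⟩ ⟨a, hj⟩ :=
  (coe_dist_eq_of_le le_sup_left (h2 i j) (hconn i) (ht i) hi).symm.trans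
    (coe_dist_eq_of_le le_sup_right (h2 i j) (hconn j) (ht j) hj)

lemma isAcyclic_coe_iSup (hconn : ∀ i, (F i).Connected)
    (h2 : ∀ i j, (F i ⊔ F j).coe.IsAcyclic) (ht : ∀ i, t ∈ (F i).verts) :
    (⨆ i, F i).coe.IsAcyclic := by
  have hmem (a : (⨆ i, F i).verts) : ∃ i, a.1 ∈ (F i).verts := by simpa using a.2
  choose ix hix using hmem
  let height : (⨆ i, F i).verts → ℕ := fun a =>
    (F (ix a)).coe.dist ⟨t, ht _⟩ ⟨a, hix a⟩
  have height_eq {K : H.Subgraph} (hK : K.coe.IsAcyclic) {a i} (hiK : F i ≤ K)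
      (ha : a.1 ∈ (F i).verts) : height a = K.coe.dist ⟨t, hiK.1 (ht i)⟩ ⟨a, hiK.1 ha⟩ :=
    (coe_dist_eq_of_mem_of_mem hconn h2 ht (hix a) ha).trans
      (coe_dist_eq_of_le hiK hK (hconn i) (ht i) ha).symm
  refine isAcyclic_of_unique_lower_neighbor height (fun a b hab => ?_)
    (fun a b c hab hac hb hc => ?_)
  · obtain ⟨i, hi⟩ := iSup_adj.mp hab
    have hK : (F i).coe.IsAcyclic := sup_idem (F i) ▸ h2 i i
    rw [height_eq hK le_rfl ((F i).edge_vert hi), height_eq hK le_rfl ((F i).edge_vert hi.symm)]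
    exact hK.dist_ne_of_adj (u := ⟨t, ht i⟩) hi (hconn i _ _)
  · obtain ⟨i, hi⟩ := iSup_adj.mp hab
    obtain ⟨j, hj⟩ := iSup_adj.mp hac
    rw [height_eq (h2 i j) le_sup_left ((F i).edge_vert hi),
      height_eq (h2 i j) le_sup_left ((F i).edge_vert hi.symm)] at hb
    rw [height_eq (h2 i j) le_sup_left ((F i).edge_vert hi),
      height_eq (h2 i j) le_sup_right ((F j).edge_vert hj.symm)] at hc
    refine Subtype.ext (Subtype.mk.inj ((h2 i j).eq_of_adj_of_dist_lt ?_ ?_ hb hc))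
    exacts [Or.inl hi, Or.inr hj]

end Subgraph

end SimpleGraph

/-- if a (nonempty) family of regions of `H` is 2-acyclic and all members
share a common vertex, then the union of all members is a tree. -/
theorem stmt1 {W ι : Type*} [Nonempty ι] (H : SimpleGraph W) (F : ι → H.Subgraph)
    (hconn : ∀ i, (F i).Connected)
    (h2 : ∀ i j, ((F i) ⊔ (F j)).coe.IsAcyclic)
    (hcommon : ∃ t : W, ∀ i, t ∈ (F i).verts) :
    (⨆ i, F i).coe.IsTree := by
  obtain ⟨t, ht⟩ := hcommon
  exact ⟨(Subgraph.connected_iSup hconn ht).coe, Subgraph.isAcyclic_coe_iSup hconn h2 ht⟩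
end

section
/- Let 𝐇 be a 2-acyclic family of regions of a graph H. If the union of three members H₁, H₂, H₃ of 𝐇 contains a cycle, then each two of these three regions have nonempty intersection. -/
/-!
If `H₁` and `H₂` were disjoint, then `(H₁ ∪ H₃) ∩ (H₂ ∪ H₃) = H₃` would be connected. But the union
of two forests with connected intersection is a forest: an edge of the first forest outside the
second is a bridge of the first, and any detour around it through the second forest can be rerouted
inside the intersection. Hence `H₁ ∪ H₂ ∪ H₃` would be acyclic.
-/

open SimpleGraph

namespace SimpleGraph

variable {V : Type*} {G : SimpleGraph V}

theorem Reachable.mem_of_forall_adj_mem {s : Set V} (hs : ∀ ⦃x y⦄, G.Adj x y → x ∈ s → y ∈ s)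
    {u v : V} (huv : G.Reachable u v) (hu : u ∈ s) : v ∈ s := by
  obtain ⟨w⟩ := huv
  induction w with
  | nil => exact hu
  | cons hadj _ ih => exact ih (hs hadj hu)

namespace Subgraph

theorem isAcyclic_coe_iff (S : G.Subgraph) : S.coe.IsAcyclic ↔ S.spanningCoe.IsAcyclic := by
  refine ⟨fun h v c hc => ?_, fun h => h.comap ⟨Subtype.val, id⟩ Subtype.val_injective⟩
  have hsupp : ∀ x ∈ c.support, x ∈ S.verts := by
    intro x hx
    obtain ⟨e, he, hxe⟩ := (c.mem_support_iff_exists_mem_edges_of_not_nil hc.not_nil).mp hx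
    exact S.mem_verts_of_mem_edge (c.edges_subset_edgeSet he) hxe
  refine (show (S.spanningCoe.induce S.verts).IsAcyclic from h) (c.induce S.verts hsupp) ?_
  let f := Embedding.induce (G := S.spanningCoe) S.verts
  exact (Walk.isCycle_map_iff_of_injective (f := f.toHom) f.injective).mp (by rwa [Walk.map_induce])

/-- A detour around `s(a, b)` through `Q` can be shortcut inside `P ⊓ Q`, whose edges avoid
`s(a, b)`. -/
theorem isBridge_spanningCoe_sup {P Q : G.Subgraph} (hPQ : (P ⊓ Q).Connected) {a b : V}
    (hPab : P.Adj a b) (hQab : ¬Q.Adj a b) (hbridge : P.spanningCoe.IsBridge s(a, b)) :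
    (P ⊔ Q).spanningCoe.IsBridge s(a, b) := by
  rw [isBridge_iff] at hbridge ⊢
  set D := P.spanningCoe.deleteEdges {s(a, b)}
  have hle : (P ⊓ Q).spanningCoe ≤ D := fun x y hxy => by
    refine SimpleGraph.deleteEdges_adj.mpr ⟨hxy.1, fun he => hQab ?_⟩
    obtain ⟨rfl, rfl⟩ | ⟨rfl, rfl⟩ := Sym2.eq_iff.mp (Set.mem_singleton_iff.mp he)
    exacts [hxy.2, hxy.2.symm]
  have hreach : ∀ ⦃y z⦄, y ∈ (P ⊓ Q).verts → z ∈ (P ⊓ Q).verts → D.Reachable y z :=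
    fun y z hy hz => (hPQ ⟨y, hy⟩ ⟨z, hz⟩).map ⟨Subtype.val, fun h => hle h⟩
  -- Invariant along a walk from `a` avoiding `s(a, b)`: a vertex in `P` is `D`-reachable from `a`,
  -- and a vertex in `Q` certifies that all of `P ⊓ Q` is.
  let X : Set V := {x | (x ∈ P.verts → D.Reachable a x) ∧
    (x ∈ Q.verts → ∀ z ∈ (P ⊓ Q).verts, D.Reachable a z)}
  have haX : a ∈ X := ⟨fun _ => .rfl, fun haQ z hz => hreach ⟨P.edge_vert hPab, haQ⟩ hz⟩
  have hX : ∀ ⦃x y⦄, ((P ⊔ Q).spanningCoe.deleteEdges {s(a, b)}).Adj x y → x ∈ X → y ∈ X := by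
    rintro x y hxy ⟨hxP, hxQ⟩
    obtain ⟨hP | hQ, hne⟩ := SimpleGraph.deleteEdges_adj.mp hxy
    · have hy : D.Reachable a y :=
        (hxP (P.edge_vert hP)).trans (Adj.reachable (SimpleGraph.deleteEdges_adj.mpr ⟨hP, hne⟩))
      exact ⟨fun _ => hy, fun hyQ z hz => hy.trans (hreach ⟨P.edge_vert hP.symm, hyQ⟩ hz)⟩
    · have hhub := hxQ (Q.edge_vert hQ)
      exact ⟨fun hyP => hhub y ⟨hyP, Q.edge_vert hQ.symm⟩, fun _ => hhub⟩
  exact fun hab => hbridge ((hab.mem_of_forall_adj_mem hX haX).1 (P.edge_vert hPab.symm))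

theorem isAcyclic_spanningCoe_sup {P Q : G.Subgraph} (hP : P.spanningCoe.IsAcyclic)
    (hQ : Q.spanningCoe.IsAcyclic) (hPQ : (P ⊓ Q).Connected) :
    (P ⊔ Q).spanningCoe.IsAcyclic := by
  intro u c hc
  by_cases hcQ : ∀ e ∈ c.edges, e ∈ Q.spanningCoe.edgeSet
  · exact hQ _ (hc.transfer hcQ)
  push Not at hcQ
  obtain ⟨e, hec, heQ⟩ := hcQ
  induction e using Sym2.ind with
  | _ a b =>
    have hQab : ¬Q.Adj a b := heQ
    have hPab : P.Adj a b := (c.adj_of_mem_edges hec).resolve_right hQab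
    exact (isBridge_spanningCoe_sup hPQ hPab hQab (isAcyclic_iff_forall_adj_isBridge.mp hP hPab)
      ).notMem_edges_of_isCycle hc hec

theorem isAcyclic_coe_sup {P Q : G.Subgraph} (hP : P.coe.IsAcyclic) (hQ : Q.coe.IsAcyclic)
    (hPQ : (P ⊓ Q).Connected) : (P ⊔ Q).coe.IsAcyclic := by
  rw [isAcyclic_coe_iff] at *
  exact isAcyclic_spanningCoe_sup hP hQ hPQ

theorem verts_inter_nonempty_of_not_isAcyclic_sup {A B C : G.Subgraph} (hC : C.Connected)
    (hAC : (A ⊔ C).coe.IsAcyclic) (hBC : (B ⊔ C).coe.IsAcyclic)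
    (hcyc : ¬(A ⊔ B ⊔ C).coe.IsAcyclic) : (A.verts ∩ B.verts).Nonempty := by
  rw [← Set.not_disjoint_iff_nonempty_inter, disjoint_verts_iff_disjoint]
  intro hAB
  have hinf : (A ⊔ C) ⊓ (B ⊔ C) = C := by rw [← sup_inf_right, hAB.eq_bot, bot_sup_eq]
  rw [← sup_idem C, ← sup_assoc, sup_right_comm A B C, sup_assoc] at hcyc
  exact hcyc (isAcyclic_coe_sup hAC hBC (by rwa [hinf]))

end Subgraph

end SimpleGraph

/-- in a 2-acyclic family of regions, if the union of three members
contains a cycle, then each two of the three regions intersect. -/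
theorem stmt2 {W ι : Type*} (H : SimpleGraph W) (F : ι → H.Subgraph)
    (hconn : ∀ i, (F i).Connected)
    (h2 : ∀ i j, ((F i) ⊔ (F j)).coe.IsAcyclic)
    (i₁ i₂ i₃ : ι)
    (hcyc : ¬ (F i₁ ⊔ F i₂ ⊔ F i₃).coe.IsAcyclic) :
    ((F i₁).verts ∩ (F i₂).verts).Nonempty ∧
    ((F i₁).verts ∩ (F i₃).verts).Nonempty ∧
    ((F i₂).verts ∩ (F i₃).verts).Nonempty := by
  refine ⟨?_, ?_, ?_⟩
  · exact Subgraph.verts_inter_nonempty_of_not_isAcyclic_sup (hconn i₃) (h2 i₁ i₃) (h2 i₂ i₃) hcyc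
  · refine Subgraph.verts_inter_nonempty_of_not_isAcyclic_sup (hconn i₂) (h2 i₁ i₂) (h2 i₃ i₂) ?_
    rwa [sup_right_comm]
  · refine Subgraph.verts_inter_nonempty_of_not_isAcyclic_sup (hconn i₁) (h2 i₂ i₁) (h2 i₃ i₁) ?_
    rwa [sup_comm (F i₂ ⊔ F i₃), ← sup_assoc]
end

section
/- Let 𝐇 be a family of regions of a graph H. Then 𝐇 is 3-acyclic if and only if 𝐇 is 2-acyclic and finitely Helly, i.e., every finite set of pairwise intersecting members of 𝐇 has a common vertex. -/
/-!
Three regions whose pairwise unions are forests, and which meet in a common vertex `t` as soon as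
they meet pairwise, have a forest as union: pieces are glued two at a time, and when every common
vertex of two pieces reaches `t` inside both, the paths to `t` in the pieces agree, so their
lengths and second vertices form a depth function with parents, which rules out cycles. If two of
the regions are disjoint one glues at the third region instead, and a region disjoint from the
other two is glued trivially.

Conversely, in a 3-acyclic family the sets `F i₀ ∩ F i` are subtrees of the tree `F i₀`, and any
three of them meet because three pairwise meeting regions span a forest, where they share the
median of a triangle of paths. Subtrees of a forest have the Helly property.
-/

open SimpleGraph

/-- A family of subgraphs is `r`-acyclic if every union of at most `r` members is acyclic. -/
def FamAcyclic {W ι : Type*} (H : SimpleGraph W) (F : ι → H.Subgraph) (r : ℕ) : Prop :=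
  ∀ S : Finset ι, S.card ≤ r → (⨆ i ∈ S, F i).coe.IsAcyclic

/-- A family is finitely Helly if every (nonempty) finite set of pairwise intersecting
members has a common vertex. -/
def FinHelly {W ι : Type*} (H : SimpleGraph W) (F : ι → H.Subgraph) : Prop :=
  ∀ S : Finset ι, S.Nonempty →
    (∀ i ∈ S, ∀ j ∈ S, ((F i).verts ∩ (F j).verts).Nonempty) →
    ∃ t : W, ∀ i ∈ S, t ∈ (F i).verts

namespace SimpleGraph

variable {V : Type*} {G : SimpleGraph V}

namespace Walk

lemma mem_of_mem_support {s : Set V} (hs : ∀ x y, G.Adj x y → x ∈ s → y ∈ s) {u v : V}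
    (p : G.Walk u v) (hu : u ∈ s) : ∀ x ∈ p.support, x ∈ s := by
  induction p with
  | nil => simpa
  | cons h p ih =>
    simp only [support_cons, List.mem_cons, forall_eq_or_imp]
    exact ⟨hu, ih (hs _ _ h hu)⟩

lemma exists_eq_append_of_end_mem (s : Set V) {u v : V} (p : G.Walk u v) (hv : v ∈ s) :
    ∃ m ∈ s, ∃ (p₁ : G.Walk u m) (p₂ : G.Walk m v),
      p = p₁.append p₂ ∧ ∀ x ∈ p₁.support, x ∈ s → x = m := by
  induction p with
  | nil => exact ⟨_, hv, nil, nil, rfl, by simp⟩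
  | @cons a _ _ h p ih =>
    by_cases ha : a ∈ s
    · exact ⟨a, ha, nil, cons h p, rfl, by simp⟩
    · obtain ⟨m, hm, p₁, p₂, rfl, hfirst⟩ := ih hv
      refine ⟨m, hm, cons h p₁, p₂, rfl, ?_⟩
      simp only [support_cons, List.mem_cons, forall_eq_or_imp]
      exact ⟨fun ha' => absurd ha' ha, hfirst⟩

lemma IsPath.append {u v w : V} {p : G.Walk u v} {q : G.Walk v w} (hp : p.IsPath)
    (hq : q.IsPath) (hpq : ∀ x ∈ p.support, x ∈ q.support → x = v) :
    (p.append q).IsPath := by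
  have hq' := hq.support_nodup
  rw [← q.cons_tail_support, List.nodup_cons] at hq'
  rw [isPath_def, support_append, List.nodup_append]
  refine ⟨hp.support_nodup, hq'.2, fun x hx y hy hxy => ?_⟩
  subst hxy
  exact hq'.1 (hpq x hx (List.mem_of_mem_tail hy) ▸ hy)

end Walk

lemma IsAcyclic.eq_of_isPath (hG : G.IsAcyclic) {u v : V} {p q : G.Walk u v} (hp : p.IsPath)
    (hq : q.IsPath) : p = q :=
  congrArg Subtype.val ((hG.subsingleton_path u v).elim ⟨p, hp⟩ ⟨q, hq⟩)

theorem IsAcyclic.exists_median (hG : G.IsAcyclic) {a b c : V} {p : G.Walk a b}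
    {q : G.Walk b c} {r : G.Walk a c} (hp : p.IsPath) (hq : q.IsPath) (hr : r.IsPath) :
    ∃ m ∈ p.support, m ∈ q.support ∧ m ∈ r.support := by
  classical
  obtain ⟨m, hmq, p₁, p₂, rfl, hfirst⟩ :=
    p.exists_eq_append_of_end_mem {x | x ∈ q.support} q.start_mem_support
  have hr' : r = p₁.append (q.dropUntil m hmq) :=
    hG.eq_of_isPath hr <| hp.of_append_left.append (hq.dropUntil hmq) fun x hx hx' =>
      hfirst x hx (q.support_dropUntil_subset_support hmq hx')
  exact ⟨m, by simp, hmq, by simp [hr']⟩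

lemma IsAcyclic.support_eq_cons_or (hG : G.IsAcyclic) {x y t : V} (hxy : G.Adj x y)
    {p : G.Walk x t} {q : G.Walk y t} (hp : p.IsPath) (hq : q.IsPath) :
    p.support = x :: q.support ∨ q.support = y :: p.support := by
  by_cases hx : x ∈ q.reverse.support
  · right
    have := hG.path_concat hp.reverse hq.reverse hxy hx
    rw [← q.reverse_reverse, this, Walk.reverse_concat]
    simp
  · left
    have hy := hG.mem_support_of_ne_mem_support_of_adj_of_isPath hp.reverse hq.reverse hxy hx
    have := hG.path_concat hq.reverse hp.reverse hxy.symm hy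
    rw [← p.reverse_reverse, this, Walk.reverse_concat]
    simp

/-- A vertex of maximal depth on a cycle would have both of its cycle neighbours as parent. -/
theorem isAcyclic_of_depth (d : V → ℕ) (par : V → V)
    (h : ∀ x y, G.Adj x y → d x = d y + 1 ∧ par x = y ∨ d y = d x + 1 ∧ par y = x) :
    G.IsAcyclic := by
  classical
  intro v c hc
  obtain ⟨x, hx, hmax⟩ := c.support.toFinset.exists_max_image d ⟨v, by simp⟩
  rw [List.mem_toFinset] at hx
  set c' := c.rotate x hx
  have hc' : c'.IsCycle := hc.rotate hx
  have hpar : ∀ y, G.Adj x y → y ∈ c'.support → par x = y := fun y hxy hy => by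
    have := hmax y (by simpa [c', Walk.mem_support_rotate_iff] using hy)
    rcases h x y hxy with h | h
    · exact h.2
    · omega
  exact hc'.snd_ne_penultimate <|
    (hpar _ (c'.adj_snd hc'.not_nil) (c'.getVert_mem_support _)).symm.trans
      (hpar _ (c'.adj_penultimate hc'.not_nil).symm (c'.getVert_mem_support _))

/-- `L x` lists the vertices of a path from `x` to the root `t`; its length and second entry serve
as depth and parent. -/
theorem isAcyclic_of_rooted_supports (t : V) (L : V → List V)
    (h : ∀ x y, G.Adj x y → ∃ G' : SimpleGraph V, G'.IsAcyclic ∧ G'.Adj x y ∧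
      (∃ p : G'.Walk x t, p.IsPath ∧ p.support = L x) ∧
      (∃ q : G'.Walk y t, q.IsPath ∧ q.support = L y)) :
    G.IsAcyclic := by
  refine isAcyclic_of_depth (fun x => (L x).length) (fun x => (L x).tail.headD t)
    fun x y hxy => ?_
  obtain ⟨G', hG', hadj, ⟨p, hp, hpL⟩, ⟨q, hq, hqL⟩⟩ := h x y hxy
  rw [← hpL, ← hqL]
  rcases hG'.support_eq_cons_or hadj hp hq with h | h
  · left
    refine ⟨by simp [h], ?_⟩
    rw [h, List.tail_cons, ← q.cons_tail_support, List.headD_cons]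
  · right
    refine ⟨by simp [h], ?_⟩
    rw [h, List.tail_cons, ← p.cons_tail_support, List.headD_cons]

def IsSubtree (G : SimpleGraph V) (s : Set V) : Prop :=
  s.Nonempty ∧
    ∀ u ∈ s, ∀ v ∈ s, ∃ p : G.Walk u v, p.IsPath ∧ ∀ x ∈ p.support, x ∈ s

lemma IsSubtree.mono {G' : SimpleGraph V} (hle : G ≤ G') {s : Set V} (hs : G.IsSubtree s) :
    G'.IsSubtree s := by
  refine ⟨hs.1, fun u hu v hv => ?_⟩
  obtain ⟨p, hp, hps⟩ := hs.2 u hu v hv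
  exact ⟨p.mapLe hle, hp.mapLe hle, by simpa using hps⟩

lemma IsAcyclic.isSubtree_inter (hG : G.IsAcyclic) {s t : Set V} (hs : G.IsSubtree s)
    (ht : G.IsSubtree t) (hst : (s ∩ t).Nonempty) : G.IsSubtree (s ∩ t) := by
  refine ⟨hst, fun u hu v hv => ?_⟩
  obtain ⟨p, hp, hps⟩ := hs.2 u hu.1 v hv.1
  obtain ⟨q, hq, hqt⟩ := ht.2 u hu.2 v hv.2
  obtain rfl := hG.eq_of_isPath hp hq
  exact ⟨p, hp, fun x hx => ⟨hps x hx, hqt x hx⟩⟩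

lemma IsAcyclic.inter_inter_nonempty (hG : G.IsAcyclic) {r s t : Set V} (hr : G.IsSubtree r)
    (hs : G.IsSubtree s) (ht : G.IsSubtree t) (hrs : (r ∩ s).Nonempty)
    (hst : (s ∩ t).Nonempty) (hrt : (r ∩ t).Nonempty) : (r ∩ s ∩ t).Nonempty := by
  obtain ⟨a, har, has⟩ := hrs
  obtain ⟨b, hbs, hbt⟩ := hst
  obtain ⟨c, hcr, hct⟩ := hrt
  obtain ⟨p, hp, hps⟩ := hs.2 a has b hbs
  obtain ⟨q, hq, hqt⟩ := ht.2 b hbt c hct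
  obtain ⟨r', hr', hr'r⟩ := hr.2 a har c hcr
  obtain ⟨m, hmp, hmq, hmr⟩ := hG.exists_median hp hq hr'
  exact ⟨m, ⟨hr'r m hmr, hps m hmp⟩, hqt m hmq⟩

theorem IsAcyclic.exists_mem_of_isSubtree {ι : Type*} (hG : G.IsAcyclic) (S : Finset ι)
    (s : ι → Set V) (hS : ∀ i ∈ S, G.IsSubtree (s i))
    (hpair : ∀ i ∈ S, ∀ j ∈ S, (s i ∩ s j).Nonempty) {r : Set V} (hr : G.IsSubtree r)
    (hrS : ∀ i ∈ S, (r ∩ s i).Nonempty) : ∃ x ∈ r, ∀ i ∈ S, x ∈ s i := by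
  classical
  induction S using Finset.induction_on generalizing r with
  | empty =>
    obtain ⟨x, hx⟩ := hr.1
    exact ⟨x, hx, by simp⟩
  | insert i S hi ih =>
    simp only [Finset.mem_insert, forall_eq_or_imp] at hS hpair hrS ⊢
    obtain ⟨x, ⟨hxr, hxi⟩, hxS⟩ := ih hS.2 (fun j hj k hk => (hpair.2 j hj).2 k hk)
      (hG.isSubtree_inter hr hS.1 hrS.1) fun j hj =>
        hG.inter_inter_nonempty hr hS.1 (hS.2 j hj) hrS.1 (hpair.1.2 j hj) (hrS.2 j hj)
    exact ⟨x, hxr, hxi, hxS⟩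

namespace Subgraph

variable {W : Type*} {H : SimpleGraph W}

lemma isAcyclic_coe_iff_s3 (A : H.Subgraph) : A.coe.IsAcyclic ↔ A.spanningCoe.IsAcyclic := by
  refine ⟨fun h v c hc => ?_, fun h => h.embedding A.coeEmbeddingSpanningCoe⟩
  have hsupp := c.mem_of_mem_support (s := A.verts) (fun x y hxy _ => A.edge_vert hxy.symm)
    (A.edge_vert (c.adj_snd hc.not_nil))
  refine h (c.induce A.verts hsupp) ((Walk.isCycle_map_iff_of_injective
    (f := (Embedding.induce A.verts).toHom) Subtype.val_injective).1 ?_)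
  rwa [Walk.map_induce]

lemma mem_verts_of_mem_support {A : H.Subgraph} {u v : W} (p : A.spanningCoe.Walk u v)
    (hu : u ∈ A.verts) : ∀ x ∈ p.support, x ∈ A.verts :=
  p.mem_of_mem_support (fun _ _ hxy _ => A.edge_vert hxy.symm) hu

lemma Connected.exists_isPath {A : H.Subgraph} (hA : A.Connected) {u v : W} (hu : u ∈ A.verts)
    (hv : v ∈ A.verts) : ∃ p : A.spanningCoe.Walk u v, p.IsPath :=
  ((hA ⟨u, hu⟩ ⟨v, hv⟩).map A.coeEmbeddingSpanningCoe.toHom).exists_isPath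

lemma Connected.isSubtree {A : H.Subgraph} (hA : A.Connected) :
    A.spanningCoe.IsSubtree A.verts := by
  refine ⟨hA.nonempty, fun u hu v hv => ?_⟩
  obtain ⟨p, hp⟩ := hA.exists_isPath hu hv
  exact ⟨p, hp, mem_verts_of_mem_support p hu⟩

lemma exists_isPath_inf {A B : H.Subgraph} (hA : A.Connected) (hB : B.Connected)
    (hAB : (A ⊔ B).spanningCoe.IsAcyclic) {u v : W} (hu : u ∈ A.verts ∩ B.verts)
    (hv : v ∈ A.verts ∩ B.verts) : ∃ p : (A ⊓ B).spanningCoe.Walk u v, p.IsPath := by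
  obtain ⟨p, hp⟩ := hA.exists_isPath hu.1 hv.1
  obtain ⟨q, hq⟩ := hB.exists_isPath hu.2 hv.2
  have hpq : p.edges = q.edges := by
    have := congrArg Walk.edges <| hAB.eq_of_isPath
      (hp.mapLe (spanningCoe_le_of_le le_sup_left)) (hq.mapLe (spanningCoe_le_of_le le_sup_right))
    rwa [Walk.edges_mapLe_eq_edges, Walk.edges_mapLe_eq_edges] at this
  refine ⟨p.transfer _ fun e he => ?_, hp.transfer _⟩
  induction e with
  | h x y => exact ⟨p.edges_subset_edgeSet he, q.edges_subset_edgeSet (hpq ▸ he)⟩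

lemma isSubtree_verts_inter {A B : H.Subgraph} (hA : A.Connected) (hB : B.Connected)
    (hAB : (A ⊔ B).spanningCoe.IsAcyclic) (hne : (A.verts ∩ B.verts).Nonempty) :
    A.spanningCoe.IsSubtree (A.verts ∩ B.verts) := by
  refine ⟨hne, fun u hu v hv => ?_⟩
  obtain ⟨p, hp⟩ := exists_isPath_inf hA hB hAB hu hv
  exact ⟨p.mapLe (spanningCoe_le_of_le inf_le_left), hp.mapLe _, by
    simpa using mem_verts_of_mem_support p hu⟩

/-- A path to `t` inside `X ⊓ Y` is at once the `X`-path and the `Y`-path, so the paths to `t`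
in `X` and in `Y` fit together. -/
theorem isAcyclic_sup_of_reachable_inf {X Y : H.Subgraph} (hX : X.Connected) (hY : Y.Connected)
    (hXa : X.spanningCoe.IsAcyclic) (hYa : Y.spanningCoe.IsAcyclic) {t : W} (htX : t ∈ X.verts)
    (htY : t ∈ Y.verts)
    (hXY : ∀ x ∈ X.verts ∩ Y.verts, (X ⊓ Y).spanningCoe.Reachable x t) :
    (X ⊔ Y).spanningCoe.IsAcyclic := by
  have hL : ∀ x, ∃ L : List W,
      (x ∈ X.verts → ∃ p : X.spanningCoe.Walk x t, p.IsPath ∧ p.support = L) ∧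
      (x ∈ Y.verts → ∃ q : Y.spanningCoe.Walk x t, q.IsPath ∧ q.support = L) := by
    intro x
    by_cases hx : x ∈ X.verts
    · obtain ⟨p, hp⟩ := hX.exists_isPath hx htX
      refine ⟨p.support, fun _ => ⟨p, hp, rfl⟩, fun hy => ?_⟩
      obtain ⟨r, hr⟩ := (hXY x ⟨hx, hy⟩).exists_isPath
      have hrp : r.mapLe (spanningCoe_le_of_le inf_le_left) = p :=
        hXa.eq_of_isPath (hr.mapLe _) hp
      exact ⟨r.mapLe (spanningCoe_le_of_le inf_le_right), hr.mapLe _, by simp [← hrp]⟩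
    · by_cases hy : x ∈ Y.verts
      · obtain ⟨q, hq⟩ := hY.exists_isPath hy htY
        exact ⟨q.support, fun hx' => absurd hx' hx, fun _ => ⟨q, hq, rfl⟩⟩
      · exact ⟨[], fun hx' => absurd hx' hx, fun hy' => absurd hy' hy⟩
  choose L hLX hLY using hL
  refine isAcyclic_of_rooted_supports t L fun x y hxy => ?_
  rcases hxy with h | h
  · exact ⟨_, hXa, h, hLX x (X.edge_vert h), hLX y (X.edge_vert h.symm)⟩
  · exact ⟨_, hYa, h, hLY x (Y.edge_vert h), hLY y (Y.edge_vert h.symm)⟩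

lemma mem_edgeSet_left_of_disjoint {X Y : H.Subgraph} (hXY : Disjoint X.verts Y.verts) {u v : W}
    (p : (X ⊔ Y).spanningCoe.Walk u v) (hu : u ∈ X.verts) :
    ∀ e ∈ p.edges, e ∈ X.spanningCoe.edgeSet := by
  have hY : ∀ a b, Y.Adj a b → a ∉ X.verts := fun a b h ha =>
    hXY.ne_of_mem ha (Y.edge_vert h) rfl
  have hsupp := p.mem_of_mem_support (s := X.verts) (fun a b (h : (X ⊔ Y).Adj a b) ha =>
    h.elim (fun h => X.edge_vert h.symm) fun h => absurd ha (hY a b h)) hu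
  intro e he
  induction e with
  | h a b =>
    have hab : (X ⊔ Y).Adj a b := p.edges_subset_edgeSet he
    exact hab.resolve_right (hY a b · (hsupp a (p.fst_mem_support_of_mem_edges he)))

theorem isAcyclic_sup_of_disjoint {X Y : H.Subgraph} (hX : X.spanningCoe.IsAcyclic)
    (hY : Y.spanningCoe.IsAcyclic) (hXY : Disjoint X.verts Y.verts) :
    (X ⊔ Y).spanningCoe.IsAcyclic := by
  intro v c hc
  rcases (X ⊔ Y).edge_vert (c.adj_snd hc.not_nil) with hv | hv
  · exact hX _ (hc.transfer (mem_edgeSet_left_of_disjoint hXY c hv))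
  · have hle := spanningCoe_le_of_le (sup_comm X Y).le
    exact hY _ (hc.mapLe hle |>.transfer (mem_edgeSet_left_of_disjoint hXY.symm _ hv))

theorem isAcyclic_sup_sup_of_mem {A B C : H.Subgraph} (hA : A.Connected) (hB : B.Connected)
    (hC : C.Connected) (hAB : (A ⊔ B).spanningCoe.IsAcyclic)
    (hAC : (A ⊔ C).spanningCoe.IsAcyclic) (hBC : (B ⊔ C).spanningCoe.IsAcyclic) {t : W}
    (htA : t ∈ A.verts) (htB : t ∈ B.verts) (htC : t ∈ C.verts) :
    (A ⊔ B ⊔ C).spanningCoe.IsAcyclic := by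
  have reach {X : H.Subgraph} (hX : X.Connected) (hXC : (X ⊔ C).spanningCoe.IsAcyclic)
      (htX : t ∈ X.verts) : ∀ x ∈ X.verts ∩ C.verts, (X ⊓ C).spanningCoe.Reachable x t :=
    fun x hx => (exists_isPath_inf hX hC hXC hx ⟨htX, htC⟩).elim fun p _ => p.reachable
  refine isAcyclic_sup_of_reachable_inf
    (connected_sup hA.preconnected hB.preconnected ⟨t, htA, htB⟩) hC hAB
    (hAC.anti (spanningCoe_le_of_le le_sup_right)) (Or.inl htA) htC ?_
  rintro x ⟨hxA | hxB, hxC⟩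
  · exact (reach hA hAC htA x ⟨hxA, hxC⟩).mono
      (spanningCoe_le_of_le (inf_le_inf_right _ le_sup_left))
  · exact (reach hB hBC htB x ⟨hxB, hxC⟩).mono
      (spanningCoe_le_of_le (inf_le_inf_right _ le_sup_right))

theorem isAcyclic_sup_sup_of_disjoint {A B C : H.Subgraph} (hA : A.Connected) (hB : B.Connected)
    (hC : C.Connected) (hAB : (A ⊔ B).spanningCoe.IsAcyclic)
    (hAC : (A ⊔ C).spanningCoe.IsAcyclic) (hAB' : (A.verts ∩ B.verts).Nonempty)
    (hAC' : (A.verts ∩ C.verts).Nonempty) (hBC : Disjoint B.verts C.verts) :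
    (A ⊔ B ⊔ C).spanningCoe.IsAcyclic := by
  obtain ⟨t, htA⟩ := hA.nonempty
  rw [sup_assoc, sup_sup_distrib_left]
  refine isAcyclic_sup_of_reachable_inf (connected_sup hA.preconnected hB.preconnected hAB')
    (connected_sup hA.preconnected hC.preconnected hAC') hAB hAC (Or.inl htA) (Or.inl htA) ?_
  rintro x ⟨hxAB, hxAC⟩
  have hxA : x ∈ A.verts := by
    rcases hxAB with hxA | hxB
    · exact hxA
    rcases hxAC with hxA | hxC
    · exact hxA
    exact absurd rfl (hBC.ne_of_mem hxB hxC)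
  obtain ⟨p, -⟩ := hA.exists_isPath hxA htA
  exact (p.mapLe (spanningCoe_le_of_le (le_inf le_sup_left le_sup_left))).reachable

theorem isAcyclic_sup_sup {A B C : H.Subgraph} (hA : A.Connected) (hB : B.Connected)
    (hC : C.Connected) (hAB : (A ⊔ B).spanningCoe.IsAcyclic)
    (hAC : (A ⊔ C).spanningCoe.IsAcyclic) (hBC : (B ⊔ C).spanningCoe.IsAcyclic)
    (hABC : (A.verts ∩ B.verts).Nonempty → (A.verts ∩ C.verts).Nonempty →
      (B.verts ∩ C.verts).Nonempty → (A.verts ∩ B.verts ∩ C.verts).Nonempty) :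
    (A ⊔ B ⊔ C).spanningCoe.IsAcyclic := by
  have hA' := hAB.anti (spanningCoe_le_of_le le_sup_left)
  have hB' := hAB.anti (spanningCoe_le_of_le le_sup_right)
  have hC' := hAC.anti (spanningCoe_le_of_le le_sup_right)
  have hBA : (B ⊔ A).spanningCoe.IsAcyclic := by rwa [sup_comm]
  have hCA : (C ⊔ A).spanningCoe.IsAcyclic := by rwa [sup_comm]
  have hCB : (C ⊔ B).spanningCoe.IsAcyclic := by rwa [sup_comm]
  by_cases hab : Disjoint A.verts B.verts <;> by_cases hac : Disjoint A.verts C.verts <;>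
    by_cases hbc : Disjoint B.verts C.verts <;>
    try simp only [Set.not_disjoint_iff_nonempty_inter] at hab hac hbc
  -- the eight cases run through the pattern of disjointness (A B, A C, B C), disjoint first
  · exact isAcyclic_sup_of_disjoint hAB hC' (hac.union_left hbc)
  · convert isAcyclic_sup_of_disjoint hBC hA' (hab.symm.union_left hac.symm) using 2
    ac_rfl
  · convert isAcyclic_sup_of_disjoint hAC hB' (hab.union_left hbc.symm) using 2
    ac_rfl
  · convert isAcyclic_sup_sup_of_disjoint hC hA hB hCA hCB (by rwa [Set.inter_comm])
      (by rwa [Set.inter_comm]) hab using 2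
    ac_rfl
  · exact isAcyclic_sup_of_disjoint hAB hC' (hac.union_left hbc)
  · convert isAcyclic_sup_sup_of_disjoint hB hA hC hBA hBC (by rwa [Set.inter_comm]) hbc hac
      using 2
    ac_rfl
  · exact isAcyclic_sup_sup_of_disjoint hA hB hC hAB hAC hab hac hbc
  · obtain ⟨t, ⟨htA, htB⟩, htC⟩ := hABC hab hac hbc
    exact isAcyclic_sup_sup_of_mem hA hB hC hAB hAC hBC htA htB htC

theorem inter_inter_nonempty_of_isAcyclic {A B C : H.Subgraph} (hA : A.Connected)
    (hB : B.Connected) (hC : C.Connected) (hABC : (A ⊔ B ⊔ C).spanningCoe.IsAcyclic)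
    (hAB : (A.verts ∩ B.verts).Nonempty) (hBC : (B.verts ∩ C.verts).Nonempty)
    (hAC : (A.verts ∩ C.verts).Nonempty) : (A.verts ∩ B.verts ∩ C.verts).Nonempty :=
  hABC.inter_inter_nonempty
    (hA.isSubtree.mono (spanningCoe_le_of_le (le_sup_left.trans le_sup_left)))
    (hB.isSubtree.mono (spanningCoe_le_of_le (le_sup_right.trans le_sup_left)))
    (hC.isSubtree.mono (spanningCoe_le_of_le le_sup_right)) hAB hBC hAC

end Subgraph

end SimpleGraph

section FamAcyclic

variable {W ι : Type*} {H : SimpleGraph W} {F : ι → H.Subgraph}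

lemma FamAcyclic.mono {r s : ℕ} (h : FamAcyclic H F r) (hsr : s ≤ r) : FamAcyclic H F s :=
  fun S hS => h S (hS.trans hsr)

lemma FamAcyclic.isAcyclic_sup (h : FamAcyclic H F 2) (a b : ι) :
    (F a ⊔ F b).spanningCoe.IsAcyclic := by
  classical
  have := h {a, b} Finset.card_le_two
  rwa [Finset.iSup_insert, Finset.iSup_singleton, Subgraph.isAcyclic_coe_iff_s3] at this

lemma FamAcyclic.isAcyclic_sup_sup (h : FamAcyclic H F 3) (a b c : ι) :
    (F a ⊔ F b ⊔ F c).spanningCoe.IsAcyclic := by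
  classical
  have := h {a, b, c} Finset.card_le_three
  rwa [Finset.iSup_insert, Finset.iSup_insert, Finset.iSup_singleton, ← sup_assoc,
    Subgraph.isAcyclic_coe_iff_s3] at this

theorem FamAcyclic.finHelly (hconn : ∀ i, (F i).Connected) (h3 : FamAcyclic H F 3) :
    FinHelly H F := by
  rintro S ⟨i₀, hi₀⟩ hS
  have h2 := h3.mono (by norm_num : 2 ≤ 3)
  have hF₀ := (h2.isAcyclic_sup i₀ i₀).anti (Subgraph.spanningCoe_le_of_le le_sup_left)
  obtain ⟨x, -, hx⟩ := hF₀.exists_mem_of_isSubtree S (fun i => (F i₀).verts ∩ (F i).verts)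
    (fun i hi => Subgraph.isSubtree_verts_inter (hconn i₀) (hconn i) (h2.isAcyclic_sup i₀ i)
      (hS i₀ hi₀ i hi))
    (fun i hi j hj => by
      obtain ⟨t, ⟨ht₀, hti⟩, htj⟩ := Subgraph.inter_inter_nonempty_of_isAcyclic (hconn i₀)
        (hconn i) (hconn j) (h3.isAcyclic_sup_sup i₀ i j) (hS i₀ hi₀ i hi) (hS i hi j hj)
        (hS i₀ hi₀ j hj)
      exact ⟨t, ⟨ht₀, hti⟩, ht₀, htj⟩)
    (hconn i₀).isSubtree fun i hi => by
      rw [← Set.inter_assoc, Set.inter_self]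
      exact hS i₀ hi₀ i hi
  exact ⟨x, fun i hi => (hx i hi).2⟩

theorem FamAcyclic.three_of_finHelly (hconn : ∀ i, (F i).Connected) (h2 : FamAcyclic H F 2)
    (hH : FinHelly H F) : FamAcyclic H F 3 := by
  classical
  intro S hS
  rcases Nat.lt_or_ge S.card 3 with hlt | hge
  · exact h2 S (by omega)
  obtain ⟨a, b, c, -, -, -, rfl⟩ := Finset.card_eq_three.1 (le_antisymm hS hge)
  rw [Finset.iSup_insert, Finset.iSup_insert, Finset.iSup_singleton, ← sup_assoc,
    Subgraph.isAcyclic_coe_iff_s3]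
  refine Subgraph.isAcyclic_sup_sup (hconn a) (hconn b) (hconn c) (h2.isAcyclic_sup a b)
    (h2.isAcyclic_sup a c) (h2.isAcyclic_sup b c) fun hab hac hbc => ?_
  have hself : ∀ i, ((F i).verts ∩ (F i).verts).Nonempty := fun i => by
    simpa using (hconn i).nonempty
  obtain ⟨t, ht⟩ := hH {a, b, c} (by simp) (by
    simp only [Finset.mem_insert, Finset.mem_singleton]
    rintro i (rfl | rfl | rfl) j (rfl | rfl | rfl) <;>
      first | exact hself _ | assumption | rwa [Set.inter_comm])
  exact ⟨t, ⟨ht a (by simp), ht b (by simp)⟩, ht c (by simp)⟩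

end FamAcyclic

/-- a family of regions is 3-acyclic iff it is 2-acyclic and finitely Helly. -/
theorem stmt3 {W ι : Type*} (H : SimpleGraph W) (F : ι → H.Subgraph)
    (hconn : ∀ i, (F i).Connected) :
    FamAcyclic H F 3 ↔ (FamAcyclic H F 2 ∧ FinHelly H F) :=
  ⟨fun h3 => ⟨h3.mono (by norm_num), h3.finHelly hconn⟩,
    fun ⟨h2, hH⟩ => h2.three_of_finHelly hconn hH⟩
end

section
/- Let 𝐇 be a 2-acyclic family of regions of a graph H. Then 𝐇 is finitely Helly if and only if every three pairwise intersecting members of 𝐇 have a common vertex. -/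
open SimpleGraph

/-! In a forest, two subtrees that meet intersect in a subtree (the path joining two common
vertices is unique), and three pairwise meeting subtrees share a vertex: the median of their
pairwise common vertices. Given a finite pairwise intersecting subfamily and a member `F a` of it,
replace every other member `F i` by `F a ⊓ F i`. These are again regions with acyclic pairwise
unions, and they still satisfy the triple condition: if any three of `F a, F i, F j, F k` meet,
then inside the tree `F i` the regions `F a`, `F j`, `F k` cut out three pairwise meeting subtrees,
so all four share a vertex. Induction on the size of the subfamily concludes. -/

namespace SimpleGraph

variable {V : Type*} {G : SimpleGraph V}

theorem IsAcyclic.exists_mem_support_of_isPath (hG : G.IsAcyclic) {p q s : V}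
    {P : G.Walk p q} {Q : G.Walk p s} {R : G.Walk q s}
    (hP : P.IsPath) (hQ : Q.IsPath) (hR : R.IsPath) :
    ∃ m ∈ P.support, m ∈ Q.support ∧ m ∈ R.support := by
  classical
  induction R with
  | nil => exact ⟨_, P.end_mem_support, Q.end_mem_support, Walk.start_mem_support _⟩
  | @cons q q' s h R ih =>
    have hR' := ((Walk.cons_isPath_iff h R).1 hR).1
    by_cases hq' : q' ∈ P.support
    · obtain ⟨m, hmP, hmQ, hmR⟩ := ih (hP.takeUntil hq') hQ hR'
      exact ⟨m, P.support_takeUntil_subset_support hq' hmP, hmQ, by simp [hmR]⟩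
    · obtain ⟨m, hmP, hmQ, hmR⟩ := ih (hP.concat hq' h) hQ hR'
      rw [Walk.support_concat, List.mem_append, List.mem_singleton] at hmP
      rcases hmP with hmP | rfl
      · exact ⟨m, hmP, hmQ, by simp [hmR]⟩
      · -- the path from `p` to `q'` along `Q` has to pass through `q`, the neighbour of `q'` on `P`
        refine ⟨q, P.end_mem_support, Q.support_takeUntil_subset_support hmQ ?_, by simp⟩
        exact hG.mem_support_of_ne_mem_support_of_adj_of_isPath (hQ.takeUntil hmQ) hP h.symm hq'

namespace Walk

theorem exists_map_hom_eq_of_toSubgraph_le {X : G.Subgraph} {u v : V} (p : G.Walk u v)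
    (h : p.toSubgraph ≤ X) :
    ∃ (hu : u ∈ X.verts) (hv : v ∈ X.verts) (p' : X.coe.Walk ⟨u, hu⟩ ⟨v, hv⟩),
      p'.map X.hom = p :=
  ⟨h.1 p.start_mem_verts_toSubgraph, h.1 p.end_mem_verts_toSubgraph,
    p.mapToSubgraph.map (Subgraph.inclusion h),
    (map_map _ _ _).trans p.map_mapToSubgraph_hom⟩

end Walk

namespace Subgraph

variable {X : G.Subgraph}

theorem isAcyclic_coe_of_le {Y : G.Subgraph} (h : X ≤ Y) (hY : Y.coe.IsAcyclic) :
    X.coe.IsAcyclic :=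
  hY.comap (inclusion h) (inclusion.injective h)

theorem eq_of_isPath_of_toSubgraph_le (hX : X.coe.IsAcyclic) {u v : V} {p q : G.Walk u v}
    (hp : p.IsPath) (hq : q.IsPath) (hpX : p.toSubgraph ≤ X) (hqX : q.toSubgraph ≤ X) :
    p = q := by
  obtain ⟨_, _, p', hp'⟩ := p.exists_map_hom_eq_of_toSubgraph_le hpX
  obtain ⟨_, _, q', hq'⟩ := q.exists_map_hom_eq_of_toSubgraph_le hqX
  have hpq : p' = q' := congrArg Subtype.val <| (hX.subsingleton_path _ _).elim
    ⟨p', Walk.IsPath.of_map (f := X.hom) (by rwa [hp'])⟩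
    ⟨q', Walk.IsPath.of_map (f := X.hom) (by rwa [hq'])⟩
  rw [← hp', ← hq', hpq]

theorem exists_mem_support_of_toSubgraph_le (hX : X.coe.IsAcyclic) {p q s : V}
    {P : G.Walk p q} {Q : G.Walk p s} {R : G.Walk q s}
    (hP : P.IsPath) (hQ : Q.IsPath) (hR : R.IsPath)
    (hPX : P.toSubgraph ≤ X) (hQX : Q.toSubgraph ≤ X) (hRX : R.toSubgraph ≤ X) :
    ∃ m ∈ P.support, m ∈ Q.support ∧ m ∈ R.support := by
  obtain ⟨_, _, P', hP'⟩ := P.exists_map_hom_eq_of_toSubgraph_le hPX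
  obtain ⟨_, _, Q', hQ'⟩ := Q.exists_map_hom_eq_of_toSubgraph_le hQX
  obtain ⟨_, _, R', hR'⟩ := R.exists_map_hom_eq_of_toSubgraph_le hRX
  obtain ⟨m, hmP, hmQ, hmR⟩ := hX.exists_mem_support_of_isPath
    (Walk.IsPath.of_map (f := X.hom) (by rwa [hP']))
    (Walk.IsPath.of_map (f := X.hom) (by rwa [hQ']))
    (Walk.IsPath.of_map (f := X.hom) (by rwa [hR']))
  rw [← hP', ← hQ', ← hR']
  exact ⟨m, Walk.support_map X.hom P' ▸ List.mem_map_of_mem hmP,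
    Walk.support_map X.hom Q' ▸ List.mem_map_of_mem hmQ,
    Walk.support_map X.hom R' ▸ List.mem_map_of_mem hmR⟩

theorem Connected.exists_isPath_toSubgraph_le (hX : X.Connected) {u v : V}
    (hu : u ∈ X.verts) (hv : v ∈ X.verts) :
    ∃ p : G.Walk u v, p.IsPath ∧ p.toSubgraph ≤ X := by
  classical
  obtain ⟨p, hp⟩ := (X.connected_iff_forall_exists_walk_subgraph.1 hX).2 hu hv
  exact ⟨p.bypass, p.bypass_isPath, Walk.toSubgraph_bypass_le_toSubgraph.trans hp⟩

theorem Connected.inf {A B : G.Subgraph} (hA : A.Connected) (hB : B.Connected)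
    (hAB : (A ⊔ B).coe.IsAcyclic) (hne : (A.verts ∩ B.verts).Nonempty) :
    (A ⊓ B).Connected := by
  refine (connected_iff_forall_exists_walk_subgraph _).2 ⟨hne, fun hu hv => ?_⟩
  obtain ⟨p, hp, hpA⟩ := hA.exists_isPath_toSubgraph_le hu.1 hv.1
  obtain ⟨q, hq, hqB⟩ := hB.exists_isPath_toSubgraph_le hu.2 hv.2
  have hpq : p = q := eq_of_isPath_of_toSubgraph_le hAB hp hq
    (hpA.trans le_sup_left) (hqB.trans le_sup_right)
  exact ⟨p, le_inf hpA (hpq ▸ hqB)⟩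

theorem exists_mem_verts_of_le_of_isAcyclic (hX : X.coe.IsAcyclic) {T₁ T₂ T₃ : G.Subgraph}
    (h₁ : T₁.Connected) (h₂ : T₂.Connected) (h₃ : T₃.Connected)
    (h₁X : T₁ ≤ X) (h₂X : T₂ ≤ X) (h₃X : T₃ ≤ X)
    (h₁₂ : (T₁.verts ∩ T₂.verts).Nonempty) (h₁₃ : (T₁.verts ∩ T₃.verts).Nonempty)
    (h₂₃ : (T₂.verts ∩ T₃.verts).Nonempty) :
    ∃ m, m ∈ T₁.verts ∧ m ∈ T₂.verts ∧ m ∈ T₃.verts := by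
  obtain ⟨p, hp₁, hp₂⟩ := h₁₂
  obtain ⟨q, hq₁, hq₃⟩ := h₁₃
  obtain ⟨s, hs₂, hs₃⟩ := h₂₃
  obtain ⟨P, hP, hPT⟩ := h₁.exists_isPath_toSubgraph_le hp₁ hq₁
  obtain ⟨Q, hQ, hQT⟩ := h₂.exists_isPath_toSubgraph_le hp₂ hs₂
  obtain ⟨R, hR, hRT⟩ := h₃.exists_isPath_toSubgraph_le hq₃ hs₃
  obtain ⟨m, hmP, hmQ, hmR⟩ := exists_mem_support_of_toSubgraph_le hX hP hQ hR
    (hPT.trans h₁X) (hQT.trans h₂X) (hRT.trans h₃X)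
  exact ⟨m, hPT.1 (P.mem_verts_toSubgraph.2 hmP), hQT.1 (Q.mem_verts_toSubgraph.2 hmQ),
    hRT.1 (R.mem_verts_toSubgraph.2 hmR)⟩

theorem exists_mem_verts_four_of_forall_three {A B C D : G.Subgraph}
    (hA : A.Connected) (hB : B.Connected) (hC : C.Connected) (hD : D.Connected)
    (hCA : (C ⊔ A).coe.IsAcyclic) (hCB : (C ⊔ B).coe.IsAcyclic) (hCD : (C ⊔ D).coe.IsAcyclic)
    (hABC : ∃ t, t ∈ A.verts ∧ t ∈ B.verts ∧ t ∈ C.verts)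
    (hACD : ∃ t, t ∈ A.verts ∧ t ∈ C.verts ∧ t ∈ D.verts)
    (hBCD : ∃ t, t ∈ B.verts ∧ t ∈ C.verts ∧ t ∈ D.verts) :
    ∃ t, t ∈ A.verts ∧ t ∈ B.verts ∧ t ∈ C.verts ∧ t ∈ D.verts := by
  obtain ⟨s, hsA, hsB, hsC⟩ := hABC
  obtain ⟨q, hqA, hqC, hqD⟩ := hACD
  obtain ⟨p, hpB, hpC, hpD⟩ := hBCD
  obtain ⟨m, ⟨hmC, hmA⟩, ⟨-, hmB⟩, ⟨-, hmD⟩⟩ := exists_mem_verts_of_le_of_isAcyclic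
    (isAcyclic_coe_of_le le_sup_left hCD)
    (hC.inf hA hCA ⟨s, hsC, hsA⟩) (hC.inf hB hCB ⟨s, hsC, hsB⟩) (hC.inf hD hCD ⟨q, hqC, hqD⟩)
    inf_le_left inf_le_left inf_le_left
    ⟨s, ⟨hsC, hsA⟩, hsC, hsB⟩ ⟨q, ⟨hqC, hqA⟩, hqC, hqD⟩ ⟨p, ⟨hpC, hpB⟩, hpC, hpD⟩
  exact ⟨m, hmA, hmB, hmC, hmD⟩

theorem exists_forall_mem_verts_of_forall_three {ι : Type*} {S : Finset ι} (hS : S.Nonempty)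
    (F : ι → G.Subgraph) (hconn : ∀ i ∈ S, (F i).Connected)
    (hacyc : ∀ i ∈ S, ∀ j ∈ S, (F i ⊔ F j).coe.IsAcyclic)
    (h3 : ∀ i ∈ S, ∀ j ∈ S, ∀ k ∈ S, ∃ t, t ∈ (F i).verts ∧ t ∈ (F j).verts ∧ t ∈ (F k).verts) :
    ∃ t, ∀ i ∈ S, t ∈ (F i).verts := by
  induction hS using Finset.Nonempty.cons_induction generalizing F with
  | singleton a =>
    obtain ⟨t, ht, -⟩ := h3 a (Finset.mem_singleton_self a) a (Finset.mem_singleton_self a)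
      a (Finset.mem_singleton_self a)
    exact ⟨t, fun i hi => Finset.mem_singleton.1 hi ▸ ht⟩
  | cons a T haT hT ih =>
    have ha : a ∈ T.cons a haT := Finset.mem_cons_self a T
    have hT' {i} (hi : i ∈ T) : i ∈ T.cons a haT := Finset.mem_cons_of_mem hi
    have hconn' : ∀ i ∈ T, (F a ⊓ F i).Connected := fun i hi =>
      let ⟨t, hta, _, hti⟩ := h3 a ha a ha i (hT' hi)
      (hconn a ha).inf (hconn i (hT' hi)) (hacyc a ha i (hT' hi)) ⟨t, hta, hti⟩
    have hacyc' : ∀ i ∈ T, ∀ j ∈ T, (F a ⊓ F i ⊔ F a ⊓ F j).coe.IsAcyclic := fun i hi j hj =>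
      isAcyclic_coe_of_le (sup_le_sup inf_le_right inf_le_right) (hacyc i (hT' hi) j (hT' hj))
    have h3' : ∀ i ∈ T, ∀ j ∈ T, ∀ k ∈ T,
        ∃ t, t ∈ (F a ⊓ F i).verts ∧ t ∈ (F a ⊓ F j).verts ∧ t ∈ (F a ⊓ F k).verts := by
      intro i hi j hj k hk
      obtain ⟨t, hta, htj, hti, htk⟩ := exists_mem_verts_four_of_forall_three (hconn a ha)
        (hconn j (hT' hj)) (hconn i (hT' hi)) (hconn k (hT' hk))
        (hacyc i (hT' hi) a ha) (hacyc i (hT' hi) j (hT' hj)) (hacyc i (hT' hi) k (hT' hk))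
        (h3 a ha j (hT' hj) i (hT' hi)) (h3 a ha i (hT' hi) k (hT' hk))
        (h3 j (hT' hj) i (hT' hi) k (hT' hk))
      exact ⟨t, ⟨hta, hti⟩, ⟨hta, htj⟩, ⟨hta, htk⟩⟩
    obtain ⟨t, ht⟩ := ih (fun i => F a ⊓ F i) hconn' hacyc' h3'
    refine ⟨t, fun i hi => ?_⟩
    rcases Finset.mem_cons.1 hi with rfl | hi
    · exact (ht _ hT.choose_spec).1
    · exact (ht i hi).2

end Subgraph

end SimpleGraph

theorem FamAcyclic.isAcyclic_sup_s4 {W ι : Type*} {H : SimpleGraph W} {F : ι → H.Subgraph}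
    (h : FamAcyclic H F 2) (i j : ι) : (F i ⊔ F j).coe.IsAcyclic := by
  classical
  have := h {i, j} Finset.card_le_two
  rwa [Finset.iSup_insert, Finset.iSup_singleton] at this

/-- a 2-acyclic family of regions is finitely Helly iff every three
pairwise intersecting members have a common vertex. -/
theorem stmt4 {W ι : Type*} (H : SimpleGraph W) (F : ι → H.Subgraph)
    (hconn : ∀ i, (F i).Connected)
    (h2 : FamAcyclic H F 2) :
    FinHelly H F ↔ ∀ i j k : ι,
      ((F i).verts ∩ (F j).verts).Nonempty →
      ((F i).verts ∩ (F k).verts).Nonempty →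
      ((F j).verts ∩ (F k).verts).Nonempty →
      ∃ t : W, t ∈ (F i).verts ∧ t ∈ (F j).verts ∧ t ∈ (F k).verts := by
  classical
  constructor
  · intro hHelly i j k hij hik hjk
    have hpair : ∀ x ∈ ({i, j, k} : Finset ι), ∀ y ∈ ({i, j, k} : Finset ι),
        ((F x).verts ∩ (F y).verts).Nonempty := by
      simp only [Finset.mem_insert, Finset.mem_singleton]
      rintro x (rfl | rfl | rfl) y (rfl | rfl | rfl) <;>
        first
        | assumption
        | rwa [Set.inter_comm]
        | rw [Set.inter_self]; first | exact hij.left | exact hij.right | exact hik.right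
    obtain ⟨t, ht⟩ := hHelly {i, j, k} (Finset.insert_nonempty _ _) hpair
    exact ⟨t, ht i (by simp), ht j (by simp), ht k (by simp)⟩
  · intro h3 S hS hpair
    exact Subgraph.exists_forall_mem_verts_of_forall_three hS F (fun i _ => hconn i)
      (fun i _ j _ => h2.isAcyclic_sup_s4 i j)
      (fun i hi j hj k hk => h3 i j k (hpair i hi j hj) (hpair i hi k hk) (hpair j hj k hk))
end

section
/- No wheel W_n with n ≥ 4 admits a 3-acyclic region representation. Consequently, any graph admitting a 3-acyclic region representation has no induced subgraph isomorphic to a wheel W_n with n ≥ 4. -/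
open SimpleGraph

/-- A region representation of `G` over `H`: each vertex gets a nonempty connected
subgraph (region) of `H`, and two distinct vertices are adjacent in `G` iff their
regions share a vertex. -/
def IsRegionRep {V W : Type*} (G : SimpleGraph V) (H : SimpleGraph W)
    (f : V → H.Subgraph) : Prop :=
  (∀ v, (f v).Connected) ∧
  ∀ u v : V, u ≠ v → (G.Adj u v ↔ ((f u).verts ∩ (f v).verts).Nonempty)

/-- The representation is `r`-acyclic: the union of the regions of any at most `r`
vertices is acyclic. -/
def RepAcyclic {V W : Type*} (H : SimpleGraph W) (f : V → H.Subgraph) (r : ℕ) : Prop :=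
  ∀ X : Finset V, X.card ≤ r → (⨆ x ∈ X, f x).coe.IsAcyclic
/-- The wheel `W_n`: a hub (`none`) adjacent to all vertices of a rim cycle on `Fin n`. -/
def wheel (n : ℕ) : SimpleGraph (Option (Fin n)) where
  Adj a b :=
    match a, b with
    | none, none => False
    | none, some _ => True
    | some _, none => True
    | some i, some j => i ≠ j ∧ ((j : ℕ) = ((i : ℕ) + 1) % n ∨ (i : ℕ) = ((j : ℕ) + 1) % n)
  symm := by
    constructor
    rintro (_|i) (_|j) h
    · exact h
    · trivial
    · trivial
    · exact ⟨h.1.symm, h.2.symm⟩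
  loopless := by
    constructor
    rintro (_|i) h
    · exact h
    · exact h.1 rfl

/-!
Let `A` be the hub region and `Rᵢ` the rim regions. In a forest, two intersecting subtrees meet
in a subtree, and three pairwise intersecting subtrees share a vertex (Helly). Hence the traces
`Tᵢ = A ∩ Rᵢ` are subtrees of the tree `A`, consecutive ones meet, and non-consecutive ones are
disjoint. The subtrees `T₀`, `T₁` and `T₂ ∪ ⋯ ∪ T_{n-1}` pairwise intersect, so by Helly some
`Tⱼ` with `2 ≤ j < n` meets `T₀ ∩ T₁`, which is impossible for `n ≥ 4`. Region representations
and their acyclicity restrict to induced subgraphs, which gives the second statement.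
-/

namespace SimpleGraph

variable {V : Type*} {G : SimpleGraph V}

theorem Walk.IsPath.eq_of_toSubgraph_le {S : G.Subgraph} (hS : S.coe.IsAcyclic) {u v : V}
    {p q : G.Walk u v} (hp : p.IsPath) (hq : q.IsPath) (hpS : p.toSubgraph ≤ S)
    (hqS : q.toSubgraph ≤ S) : p = q := by
  have hu := hpS.1 p.start_mem_verts_toSubgraph
  have hv := hpS.1 p.end_mem_verts_toSubgraph
  have lift : ∀ {r : G.Walk u v}, r.toSubgraph ≤ S → r.IsPath →
      ∃ r' : S.coe.Path ⟨u, hu⟩ ⟨v, hv⟩, r'.1.map S.hom = r := by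
    intro r hrS hr
    let r' : S.coe.Walk ⟨u, hu⟩ ⟨v, hv⟩ := r.mapToSubgraph.map (Subgraph.inclusion hrS)
    have hmap : r'.map S.hom = r := (Walk.map_map _ _ _).trans r.map_mapToSubgraph_hom
    refine ⟨⟨r', ?_⟩, hmap⟩
    rw [← Walk.isPath_map_iff_of_injective (f := S.hom) Subtype.val_injective, hmap]
    exact hr
  obtain ⟨p', rfl⟩ := lift hpS hp
  obtain ⟨q', rfl⟩ := lift hqS hq
  rw [(hS.subsingleton_path _ _).elim p' q']

namespace Subgraph

variable {S A B C : G.Subgraph}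

theorem Connected.inf_of_isAcyclic (hS : S.coe.IsAcyclic) (hAS : A ≤ S) (hBS : B ≤ S)
    (hA : A.Connected) (hB : B.Connected) (hAB : (A ⊓ B).verts.Nonempty) :
    (A ⊓ B).Connected := by
  classical
  refine (connected_iff_forall_exists_walk_subgraph _).2 ⟨hAB, fun {u v} hu hv => ?_⟩
  obtain ⟨p, hpA⟩ := (connected_iff_forall_exists_walk_subgraph _).1 hA |>.2 hu.1 hv.1
  obtain ⟨q, hqB⟩ := (connected_iff_forall_exists_walk_subgraph _).1 hB |>.2 hu.2 hv.2
  have hpA' := p.toSubgraph_bypass_le_toSubgraph.trans hpA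
  have hqB' := q.toSubgraph_bypass_le_toSubgraph.trans hqB
  have hpq : p.bypass = q.bypass := p.bypass_isPath.eq_of_toSubgraph_le hS q.bypass_isPath
    (hpA'.trans hAS) (hqB'.trans hBS)
  exact ⟨p.bypass, le_inf hpA' (hpq ▸ hqB')⟩

theorem inf_verts_nonempty_of_connected_sup (hAB : (A ⊔ B).Connected)
    (hA : A.verts.Nonempty) (hB : B.verts.Nonempty) : (A ⊓ B).verts.Nonempty := by
  by_contra hdisj
  obtain ⟨a, ha⟩ := hA
  obtain ⟨b, hb⟩ := hB
  have hbA : b ∉ A.verts := fun hbA => hdisj ⟨b, hbA, hb⟩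
  obtain ⟨p, hp⟩ := (connected_iff_forall_exists_walk_subgraph _).1 hAB |>.2
    (Or.inl ha : a ∈ (A ⊔ B).verts) (Or.inr hb)
  obtain ⟨d, hd, hdA, hdA'⟩ := p.exists_boundary_dart A.verts ha hbA
  have hdp : p.toSubgraph.Adj d.fst d.snd :=
    Walk.adj_toSubgraph_iff_mem_edges.2 (List.mem_map_of_mem (f := Dart.edge) hd)
  rcases hp.2 hdp with hdA'' | hdB
  · exact hdA' hdA''.snd_mem
  · exact hdisj ⟨d.fst, hdA, hdB.fst_mem⟩

theorem helly_of_isAcyclic (hS : S.coe.IsAcyclic) (hAS : A ≤ S) (hBS : B ≤ S) (hCS : C ≤ S)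
    (hA : A.Connected) (hB : B.Connected) (hC : C.Connected) (hAB : (A ⊓ B).verts.Nonempty)
    (hBC : (B ⊓ C).verts.Nonempty) (hAC : (A ⊓ C).verts.Nonempty) :
    (A ⊓ B ⊓ C).verts.Nonempty := by
  have hBC' : (B ⊔ C).Connected := connected_sup hB.preconnected hC.preconnected hBC
  have hABC : (A ⊓ (B ⊔ C)).Connected :=
    hA.inf_of_isAcyclic hS hAS (sup_le hBS hCS) hBC' (hAB.mono (by gcongr; exact le_sup_left))
  rw [inf_sup_left] at hABC
  rw [inf_assoc, inf_inf_distrib_left]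
  exact inf_verts_nonempty_of_connected_sup hABC hAB hAC

theorem connected_iSup_le_of_chain {T : ℕ → G.Subgraph} (hT : ∀ k, (T k).Connected) :
    ∀ {m : ℕ}, (∀ k < m, (T k ⊓ T (k + 1)).verts.Nonempty) → (⨆ k ≤ m, T k).Connected
  | 0, _ => by simpa using hT 0
  | m + 1, h => by
    rw [Nat.iSup_le_succ]
    refine connected_sup (connected_iSup_le_of_chain hT fun k hk => h k (by omega)).preconnected
      (hT _).preconnected ((h m m.lt_succ_self).mono ?_)
    gcongr
    exact le_iSup₂_of_le m le_rfl le_rfl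

theorem exists_inf_inf_verts_nonempty_of_cycle (hS : S.coe.IsAcyclic) {T : ℕ → G.Subgraph}
    (hTS : ∀ k, T k ≤ S) (hT : ∀ k, (T k).Connected) {m : ℕ}
    (hchain : ∀ k < m + 2, (T k ⊓ T (k + 1)).verts.Nonempty)
    (hcycle : (T (m + 2) ⊓ T 0).verts.Nonempty) :
    ∃ j ≤ m, (T 0 ⊓ T 1 ⊓ T (j + 2)).verts.Nonempty := by
  set Q := ⨆ k ≤ m, T (k + 2)
  have hTQ : ∀ k ≤ m, T (k + 2) ≤ Q := fun k hk => le_iSup₂_of_le k hk le_rfl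
  have hQ : Q.Connected :=
    connected_iSup_le_of_chain (fun k => hT (k + 2)) fun k hk => hchain (k + 2) (by omega)
  obtain ⟨x, hx01, hxQ⟩ := helly_of_isAcyclic hS (hTS 0) (hTS 1)
    (iSup₂_le fun k _ => hTS (k + 2)) (hT 0) (hT 1) hQ (hchain 0 (by omega))
    ((hchain 1 (by omega)).mono (inf_le_inf_left _ (hTQ 0 m.zero_le)).1)
    (by rw [inf_comm]; exact hcycle.mono (inf_le_inf_right _ (hTQ m le_rfl)).1)
  obtain ⟨j, hj, hxj⟩ : ∃ j ≤ m, x ∈ (T (j + 2)).verts := by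
    simpa only [Q, verts_iSup, Set.mem_iUnion, exists_prop] using hxQ
  exact ⟨j, hj, x, hx01, hxj⟩

end Subgraph

end SimpleGraph

section RegionRep

variable {V V' W : Type*} {G : SimpleGraph V} {G' : SimpleGraph V'} {H : SimpleGraph W}
  {f : V → H.Subgraph}

theorem IsRegionRep.inf_verts_nonempty_of_adj (hf : IsRegionRep G H f) {u v : V}
    (huv : G.Adj u v) : (f u ⊓ f v).verts.Nonempty :=
  (hf.2 u v huv.ne).1 huv

theorem IsRegionRep.eq_or_adj_of_inf_verts_nonempty (hf : IsRegionRep G H f) {u v : V}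
    (huv : (f u ⊓ f v).verts.Nonempty) : u = v ∨ G.Adj u v :=
  or_iff_not_imp_left.2 fun hne => (hf.2 u v hne).2 huv

theorem IsRegionRep.comp_embedding (hf : IsRegionRep G H f) (e : G' ↪g G) :
    IsRegionRep G' H (f ∘ e) :=
  ⟨fun v => hf.1 (e v), fun _ _ huv => e.map_adj_iff.symm.trans (hf.2 _ _ (e.injective.ne huv))⟩

theorem RepAcyclic.comp {r : ℕ} (hf : RepAcyclic H f r) (φ : V' → V) :
    RepAcyclic H (f ∘ φ) r := by
  classical
  intro X hX
  have h := hf (X.image φ) (Finset.card_image_le.trans hX)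
  rwa [Finset.iSup_finset_image] at h

theorem RepAcyclic.isAcyclic_sup_sup (hf : RepAcyclic H f 3) (a b c : V) :
    (f a ⊔ f b ⊔ f c).coe.IsAcyclic := by
  classical
  have h := hf {a, b, c} Finset.card_le_three
  rwa [Finset.iSup_insert, Finset.iSup_insert, Finset.iSup_singleton, ← sup_assoc] at h

end RegionRep

section Wheel

open Fin.NatCast

theorem wheel_not_eq_or_adj_zero_and_one {n : ℕ} [NeZero n] (hn : 4 ≤ n) {k : ℕ} (hk : 2 ≤ k)
    (hkn : k < n) :
    ¬((some 0 = some (k : Fin n) ∨ (wheel n).Adj (some 0) (some k)) ∧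
      (some 1 = some (k : Fin n) ∨ (wheel n).Adj (some 1) (some k))) := by
  have hk1 : k + 1 < n ∨ k + 1 = n := by omega
  simp only [wheel, Option.some.injEq, Fin.ext_iff, Fin.val_natCast, Fin.val_zero, Fin.val_one',
    Nat.mod_eq_of_lt hkn, Nat.mod_eq_of_lt (show 1 < n by omega),
    Nat.mod_eq_of_lt (show 2 < n by omega)]
  rcases hk1 with hk1 | hk1
  · rw [Nat.mod_eq_of_lt hk1]; omega
  · rw [hk1, Nat.mod_self]; omega

theorem wheel_adj_add_one {n : ℕ} [NeZero n] (hn : 2 ≤ n) (i : Fin n) :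
    (wheel n).Adj (some i) (some (i + 1)) := by
  have h1 : ((i + 1 : Fin n) : ℕ) = ((i : ℕ) + 1) % n := by
    rw [Fin.val_add, Fin.val_one', Nat.add_mod_mod]
  refine ⟨fun h => ?_, Or.inl h1⟩
  rw [Fin.ext_iff, h1] at h
  rcases (show (i : ℕ) + 1 < n ∨ (i : ℕ) + 1 = n by omega) with h2 | h2
  · rw [Nat.mod_eq_of_lt h2] at h; omega
  · rw [h2, Nat.mod_self] at h; omega

theorem not_repAcyclic_three_of_isRegionRep_wheel {n : ℕ} (hn : 4 ≤ n) {W : Type*}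
    {H : SimpleGraph W} {f : Option (Fin n) → H.Subgraph} (hf : IsRegionRep (wheel n) H f) :
    ¬RepAcyclic H f 3 := by
  intro hac
  obtain ⟨m, rfl⟩ := Nat.exists_eq_add_of_le' hn
  let T : ℕ → H.Subgraph := fun k => f none ⊓ f (some (k : Fin (m + 4)))
  have hA : (f none).coe.IsAcyclic := by
    have h := hac.isAcyclic_sup_sup none none none
    rwa [sup_idem, sup_idem] at h
  have hT : ∀ k, (T k).Connected := fun k =>
    (hf.1 none).inf_of_isAcyclic (hac.isAcyclic_sup_sup none (some (k : Fin (m + 4))) (some k))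
      (le_sup_left.trans le_sup_left) le_sup_right (hf.1 _) (hf.inf_verts_nonempty_of_adj trivial)
  have hTT : ∀ k, (T k ⊓ T (k + 1)).verts.Nonempty := by
    intro k
    simp only [T, Nat.cast_succ]
    rw [← inf_inf_distrib_left, ← inf_assoc]
    exact Subgraph.helly_of_isAcyclic (hac.isAcyclic_sup_sup none (some (k : Fin (m + 4)))
        (some (k + 1)))
      (le_sup_left.trans le_sup_left) (le_sup_right.trans le_sup_left) le_sup_right (hf.1 _)
      (hf.1 _) (hf.1 _) (hf.inf_verts_nonempty_of_adj trivial)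
      (hf.inf_verts_nonempty_of_adj (wheel_adj_add_one (by omega) _))
      (hf.inf_verts_nonempty_of_adj trivial)
  have hcycle : (T (m + 3) ⊓ T 0).verts.Nonempty := by
    simpa only [T, Fin.natCast_self, Nat.cast_zero] using hTT (m + 3)
  obtain ⟨j, hj, x, ⟨⟨-, hx0⟩, -, hx1⟩, -, hxj⟩ := Subgraph.exists_inf_inf_verts_nonempty_of_cycle
    hA (fun _ => inf_le_left) hT (fun k _ => hTT k) hcycle
  simp only [Nat.cast_zero, Nat.cast_one] at hx0 hx1
  exact wheel_not_eq_or_adj_zero_and_one hn (k := j + 2) (by omega) (by omega)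
    ⟨hf.eq_or_adj_of_inf_verts_nonempty ⟨x, hx0, hxj⟩,
      hf.eq_or_adj_of_inf_verts_nonempty ⟨x, hx1, hxj⟩⟩

end Wheel

universe u v

/-- no wheel `W_n` with `n ≥ 4` has a 3-acyclic region representation;
consequently no graph with a 3-acyclic region representation contains an induced
subgraph isomorphic to such a wheel. -/
theorem stmt8 (n : ℕ) (hn : 4 ≤ n) :
    (∀ {W : Type u} (H : SimpleGraph W) (f : Option (Fin n) → H.Subgraph),
      ¬ (IsRegionRep (wheel n) H f ∧ RepAcyclic H f 3)) ∧
    (∀ {V : Type u} {W : Type v} (G : SimpleGraph V) (H : SimpleGraph W)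
        (f : V → H.Subgraph), IsRegionRep G H f → RepAcyclic H f 3 →
      ¬ ∃ φ : Option (Fin n) → V, Function.Injective φ ∧
          ∀ a b, G.Adj (φ a) (φ b) ↔ (wheel n).Adj a b) := by
  refine ⟨fun _ _ ⟨hf, hac⟩ => not_repAcyclic_three_of_isRegionRep_wheel hn hf hac, ?_⟩
  rintro V W G H f hf hac ⟨φ, hφ, hadj⟩
  let e : wheel n ↪g G := ⟨⟨φ, hφ⟩, hadj _ _⟩
  exact not_repAcyclic_three_of_isRegionRep_wheel hn (hf.comp_embedding e) (hac.comp e)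
end

section
/- If a graph G admits a subtree representation over a tree (more generally, an acyclic region representation), then G is chordal. -/
open SimpleGraph

/-- A graph is chordal if every cycle of length at least 4 has a chord: an edge of the
graph between two vertices of the cycle that is not an edge of the cycle. -/
def Chordal {V : Type*} (G : SimpleGraph V) : Prop :=
  ∀ (v : V) (w : G.Walk v v), w.IsCycle → 4 ≤ w.length →
    ∃ a b, a ∈ w.support ∧ b ∈ w.support ∧ G.Adj a b ∧ ¬ w.toSubgraph.Adj a b

/-!
Suppose `v₀ v₁ v₂ v₃ … v₀` is an induced cycle of length at least four. The regions of `v₁`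
and `v₂` form a connected subgraph `K₁`, and the regions of the arc `v₃ … v₀` form a connected
subgraph `K₂`. In a forest the intersection of two connected subgraphs is connected, so a point
of `f v₀ ∩ f v₁` and a point of `f v₂ ∩ f v₃` are joined by a path in `K₁ ⊓ K₂`. An edge of this
path leaving `f v₁` must lie in `f v₂`, and its first endpoint lies in `f v₁ ∩ K₂ ⊆ f v₀` (the
only neighbour of `v₁` on the arc is `v₀`). Hence `f v₀` meets `f v₂`, a chord.
-/

namespace SimpleGraph

variable {V : Type*} {G : SimpleGraph V}

theorem Subgraph.eq_of_isPath_of_toSubgraph_le_s9 {T : G.Subgraph} (hT : T.coe.IsAcyclic)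
    {u v : V} {p q : G.Walk u v} (hp : p.IsPath) (hq : q.IsPath)
    (hpT : p.toSubgraph ≤ T) (hqT : q.toSubgraph ≤ T) : p = q := by
  have hu : u ∈ T.verts := hpT.1 p.start_mem_verts_toSubgraph
  have hv : v ∈ T.verts := hpT.1 p.end_mem_verts_toSubgraph
  have lift (p : G.Walk u v) (hpT : p.toSubgraph ≤ T) :
      ∃ p' : T.coe.Walk ⟨u, hu⟩ ⟨v, hv⟩, p'.map T.hom = p :=
    ⟨p.mapToSubgraph.map (Subgraph.inclusion hpT),
      (Walk.map_map _ _ _).trans p.map_mapToSubgraph_hom⟩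
  obtain ⟨p', rfl⟩ := lift p hpT
  obtain ⟨q', rfl⟩ := lift q hqT
  obtain rfl : p' = q' :=
    congrArg Subtype.val ((hT.subsingleton_path _ _).elim ⟨p', hp.of_map⟩ ⟨q', hq.of_map⟩)
  rfl

theorem Subgraph.Preconnected.inf_of_isAcyclic {T K₁ K₂ : G.Subgraph} (hT : T.coe.IsAcyclic)
    (h₁ : K₁ ≤ T) (h₂ : K₂ ≤ T) (hK₁ : K₁.Preconnected) (hK₂ : K₂.Preconnected) :
    (K₁ ⊓ K₂).Preconnected := by
  classical
  rw [Subgraph.preconnected_iff_forall_exists_walk_subgraph] at hK₁ hK₂ ⊢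
  rintro u v ⟨hu₁, hu₂⟩ ⟨hv₁, hv₂⟩
  obtain ⟨p₁, hp₁⟩ := hK₁ hu₁ hv₁
  obtain ⟨p₂, hp₂⟩ := hK₂ hu₂ hv₂
  have hb₁ := Walk.toSubgraph_bypass_le_toSubgraph.trans hp₁
  have hb₂ := Walk.toSubgraph_bypass_le_toSubgraph.trans hp₂
  have hbypass : p₁.bypass = p₂.bypass := Subgraph.eq_of_isPath_of_toSubgraph_le_s9 hT
    p₁.bypass_isPath p₂.bypass_isPath (hb₁.trans h₁) (hb₂.trans h₂)
  exact ⟨p₁.bypass, le_inf hb₁ (hbypass ▸ hb₂)⟩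

theorem Walk.toSubgraph_adj_of_mem_darts {u v : V} {p : G.Walk u v} {d : G.Dart}
    (hd : d ∈ p.darts) : p.toSubgraph.Adj d.fst d.snd :=
  Walk.adj_toSubgraph_iff_mem_edges.mpr (List.mem_map_of_mem hd)

theorem Walk.IsCycle.eq_or_eq_of_adj_getVert {u : V} {c : G.Walk u u} (hc : c.IsCycle)
    (hind : c.toSubgraph.IsInduced) {i : ℕ} (hi₀ : i ≠ 0) (hi : i < c.length) {x : V}
    (hx : x ∈ c.support) (hadj : G.Adj (c.getVert i) x) :
    x = c.getVert (i - 1) ∨ x = c.getVert (i + 1) := by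
  have : x ∈ c.toSubgraph.neighborSet (c.getVert i) :=
    hind (c.mem_verts_toSubgraph.mpr (c.getVert_mem_support i)) (c.mem_verts_toSubgraph.mpr hx)
      hadj
  rwa [hc.neighborSet_toSubgraph_internal hi₀ hi] at this

end SimpleGraph

namespace IsRegionRep

variable {V W : Type*} {G : SimpleGraph V} {H : SimpleGraph W} {f : V → H.Subgraph}

theorem inter_nonempty_of_adj (hf : IsRegionRep G H f) {u v : V} (h : G.Adj u v) :
    ((f u).verts ∩ (f v).verts).Nonempty :=
  (hf.2 u v h.ne).mp h

theorem eq_or_adj_of_inter_nonempty (hf : IsRegionRep G H f) {u v : V}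
    (h : ((f u).verts ∩ (f v).verts).Nonempty) : u = v ∨ G.Adj u v := by
  by_cases huv : u = v
  · exact .inl huv
  · exact .inr ((hf.2 u v huv).mpr h)

theorem connected_sup_of_adj (hf : IsRegionRep G H f) {u v : V} (h : G.Adj u v) :
    (f u ⊔ f v).Connected :=
  Subgraph.connected_sup (hf.1 u).preconnected (hf.1 v).preconnected
    (hf.inter_nonempty_of_adj h)

theorem connected_biSup_support (hf : IsRegionRep G H f) {u v : V} (p : G.Walk u v) :
    (⨆ x ∈ p.support, f x).Connected := by
  induction p with
  | nil => simpa using hf.1 _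
  | @cons a b _ h p ih =>
    have hsupp : (⨆ x ∈ (Walk.cons h p).support, f x) = f a ⊔ ⨆ x ∈ p.support, f x := by
      simp [iSup_or, iSup_sup_eq]
    rw [hsupp]
    obtain ⟨z, hza, hzb⟩ := hf.inter_nonempty_of_adj h
    refine Subgraph.connected_sup (hf.1 a).preconnected ih.preconnected ⟨z, hza, ?_⟩
    simp only [Subgraph.verts_iSup, Set.mem_iUnion]
    exact ⟨b, p.start_mem_support, hzb⟩

theorem eq_or_adj_of_isAcyclic (hf : IsRegionRep G H f) (hac : (⨆ v, f v).coe.IsAcyclic)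
    {v₀ v₁ v₂ v₃ : V} (h₀₁ : G.Adj v₀ v₁) (h₁₂ : G.Adj v₁ v₂) (h₂₃ : G.Adj v₂ v₃)
    (r : G.Walk v₃ v₀) (hr : ∀ x ∈ r.support, (v₁ = x ∨ G.Adj v₁ x) → x = v₀) :
    v₀ = v₂ ∨ G.Adj v₀ v₂ := by
  by_contra h₀₂
  have hd₀₂ : ∀ z ∈ (f v₀).verts, z ∉ (f v₂).verts := fun z h₀ h₂ =>
    h₀₂ (hf.eq_or_adj_of_inter_nonempty ⟨z, h₀, h₂⟩)
  set K := ⨆ x ∈ r.support, f x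
  have mem_K {x z} (hx : x ∈ r.support) (hz : z ∈ (f x).verts) : z ∈ K.verts := by
    simp only [K, Subgraph.verts_iSup, Set.mem_iUnion]
    exact ⟨x, hx, hz⟩
  have hK : ∀ z ∈ (f v₁).verts, z ∈ K.verts → z ∈ (f v₀).verts := by
    intro z h₁ hzK
    simp only [K, Subgraph.verts_iSup, Set.mem_iUnion] at hzK
    obtain ⟨x, hx, hzx⟩ := hzK
    rwa [← hr x hx (hf.eq_or_adj_of_inter_nonempty ⟨z, h₁, hzx⟩)]
  have hpre : ((f v₁ ⊔ f v₂) ⊓ K).Preconnected :=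
    Subgraph.Preconnected.inf_of_isAcyclic hac (sup_le (le_iSup f _) (le_iSup f _))
      (iSup₂_le fun x _ => le_iSup f x) (hf.connected_sup_of_adj h₁₂).preconnected
      (hf.connected_biSup_support r).preconnected
  obtain ⟨p₀, hp₀₀, hp₀₁⟩ := hf.inter_nonempty_of_adj h₀₁
  obtain ⟨p₂, hp₂₂, hp₂₃⟩ := hf.inter_nonempty_of_adj h₂₃
  obtain ⟨P, hP⟩ := (Subgraph.preconnected_iff_forall_exists_walk_subgraph _).mp hpre
    (u := p₀) (v := p₂) ⟨.inl hp₀₁, mem_K r.end_mem_support hp₀₀⟩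
    ⟨.inr hp₂₂, mem_K r.start_mem_support hp₂₃⟩
  have hp₂ : p₂ ∉ (f v₁).verts := fun h =>
    hd₀₂ p₂ (hK p₂ h (mem_K r.start_mem_support hp₂₃)) hp₂₂
  obtain ⟨d, hdP, hd₁, hd₂⟩ := P.exists_boundary_dart (f v₁).verts hp₀₁ hp₂
  obtain ⟨hd₁₂, hdK⟩ := Subgraph.inf_adj.mp (hP.2 (Walk.toSubgraph_adj_of_mem_darts hdP))
  rcases Subgraph.sup_adj.mp hd₁₂ with hd | hd
  · exact hd₂ hd.snd_mem
  · exact hd₀₂ _ (hK _ hd₁ hdK.fst_mem) hd.fst_mem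

theorem not_isInduced_toSubgraph_of_isCycle (hf : IsRegionRep G H f)
    (hac : (⨆ v, f v).coe.IsAcyclic) {u : V} {c : G.Walk u u} (hc : c.IsCycle)
    (hlen : 4 ≤ c.length) : ¬c.toSubgraph.IsInduced := by
  intro hind
  rcases c with _ | ⟨h₀₁, _ | ⟨h₁₂, _ | ⟨h₂₃, r⟩⟩⟩
  · simp at hlen
  · simp at hlen
  · simp at hlen
  rename_i v₁ v₂ v₃
  simp only [Walk.length_cons] at hlen
  obtain ⟨⟨-, hv₁⟩, hv₂, -⟩ : (v₁ ≠ v₂ ∧ v₁ ∉ r.support) ∧ v₂ ∉ r.support ∧ r.support.Nodup := by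
    simpa using hc.support_nodup
  have hv₃₀ : v₃ ≠ u := fun h =>
    absurd (hc.getVert_injOn' (by simp; omega) (by simp) (by simpa using h)) (by decide : 3 ≠ 0)
  have hr : ∀ x ∈ r.support, (v₁ = x ∨ G.Adj v₁ x) → x = u := by
    rintro x hx (rfl | hadj)
    · exact absurd hx hv₁
    · have := hc.eq_or_eq_of_adj_getVert hind (i := 1) (x := x) one_ne_zero (by simp) (by simp [hx])
        (by simpa using hadj)
      simp only [Walk.getVert_cons_succ, Walk.getVert_zero] at this
      exact this.resolve_right fun h => hv₂ (h ▸ hx)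
  rcases hf.eq_or_adj_of_isAcyclic hac h₀₁ h₁₂ h₂₃ r hr with h | h
  · exact hv₂ (h ▸ r.end_mem_support)
  · have := hc.eq_or_eq_of_adj_getVert hind (i := 2) (x := u) two_ne_zero (by simp) (by simp)
      (by simpa using h.symm)
    simp only [Walk.getVert_cons_succ, Walk.getVert_zero] at this
    exact this.elim h₀₁.ne hv₃₀.symm

end IsRegionRep

/-- if `G` admits an acyclic region representation (in particular a
subtree representation over a tree), then `G` is chordal. -/
theorem stmt9 {V W : Type*} (G : SimpleGraph V) (H : SimpleGraph W) (f : V → H.Subgraph)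
    (hrep : IsRegionRep G H f) (hac : (⨆ v, f v).coe.IsAcyclic) :
    Chordal G := by
  intro v w hw hlen
  by_contra! hchordless
  exact hrep.not_isInduced_toSubgraph_of_isCycle hac hw hlen fun a ha b hb hab =>
    hchordless a b (w.mem_verts_toSubgraph.mp ha) (w.mem_verts_toSubgraph.mp hb) hab
end

section
/- Let (H, 𝒱) be a graph-decomposition of a graph G with a fixed family (H_v) of co-parts, and suppose the decomposition is 2-acyclic (the union of any two co-parts is acyclic). Then for every vertex v, the co-part H_v equals the subgraph of ⋃_{u∈V(G)} H_u induced on the vertex set of H_v; in particular each H_v is an induced subtree of ⋃_u H_u. -/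
open SimpleGraph

namespace SimpleGraph.Subgraph

variable {W : Type*} {H : SimpleGraph W}

/-- A path in `A` between the ends of an edge of `K` is also a path in the acyclic `K`,
hence is that edge. -/
theorem Connected.adj_of_le_of_isAcyclic {A K : H.Subgraph} (hA : A.Connected) (hle : A ≤ K)
    (hK : K.coe.IsAcyclic) {a b : W} (ha : a ∈ A.verts) (hb : b ∈ A.verts) (hadj : K.Adj a b) :
    A.Adj a b := by
  classical
  obtain ⟨w⟩ := hA ⟨a, ha⟩ ⟨b, hb⟩
  let p := w.toPath
  have hKadj : K.coe.Adj ⟨a, hle.1 ha⟩ ⟨b, hle.1 hb⟩ := hadj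
  have hunique : p.map (inclusion hle) (inclusion.injective hle) = Path.singleton hKadj :=
    (hK.subsingleton_path _ _).elim _ _
  have hlen : p.1.length = 1 := by
    have h := congrArg (fun r => r.1.length) hunique
    simp only [Path.map_coe, Walk.length_map] at h
    exact h
  exact Walk.adj_of_length_eq_one hlen

end SimpleGraph.Subgraph

theorem stmt15_general {V W : Type*} (H : SimpleGraph W) (f : V → H.Subgraph)
    (hconn : ∀ v, (f v).Connected)
    (h2 : ∀ u v : V, ((f u) ⊔ (f v)).coe.IsAcyclic) :
    ∀ v : V, f v = (⨆ u, f u).induce (f v).verts ∧ (f v).coe.IsTree := by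
  intro v
  refine ⟨Subgraph.ext (by simp) ?_, hconn v, sup_idem (f v) ▸ h2 v v⟩
  ext a b
  simp only [Subgraph.induce_adj, Subgraph.iSup_adj]
  refine ⟨fun h => ⟨h.fst_mem, h.snd_mem, v, h⟩, ?_⟩
  rintro ⟨ha, hb, u, hu⟩
  exact (hconn v).adj_of_le_of_isAcyclic le_sup_right (h2 u v) ha hb
    (Subgraph.sup_adj.2 (Or.inl hu))

/-- in a 2-acyclic graph-decomposition (given by its co-parts `f v`),
every co-part is the induced subgraph of the union of all co-parts on its vertex set,
and is an (induced) subtree. -/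
theorem stmt15 {V W : Type*} (G : SimpleGraph V) (H : SimpleGraph W) (f : V → H.Subgraph)
    (hconn : ∀ v, (f v).Connected)
    (hedge : ∀ u v, G.Adj u v → ((f u).verts ∩ (f v).verts).Nonempty)
    (h2 : ∀ u v : V, ((f u) ⊔ (f v)).coe.IsAcyclic) :
    ∀ v : V, f v = (⨆ u, f u).induce (f v).verts ∧ (f v).coe.IsTree :=
  stmt15_general H f hconn h2
end

section
/- Let (H, 𝒱) be an honest, r-acyclic graph-decomposition of a graph G, where r ≥ 3. Then the model graph H has girth greater than r, i.e., H contains no cycle of length at most r. -/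
/-!
A cycle of length `ℓ` in `H` passes through `ℓ` edges, and by honesty each of them lies in the
co-part of some vertex of `G` (any vertex of its adhesion set). The union of these at most `ℓ`
co-parts contains the cycle, so `r`-acyclicity forces `ℓ > r`.
-/

open SimpleGraph

/-- The co-part of a vertex `v` in a graph-decomposition with bags `𝒱`: the subgraph
of the model graph `H` induced on the nodes whose bag contains `v`. -/
def copart {V W : Type*} (H : SimpleGraph W) (𝒱 : W → Set V) (v : V) : H.Subgraph :=
  (⊤ : H.Subgraph).induce {h | v ∈ 𝒱 h}

namespace SimpleGraph

variable {W : Type*} {H : SimpleGraph W}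

theorem Walk.IsCycle.not_isAcyclic_toSubgraph_coe {a : W} {w : H.Walk a a} (hw : w.IsCycle) :
    ¬ w.toSubgraph.coe.IsAcyclic := fun hacyc ↦
  hacyc _ <| by
    rwa [← Walk.isCycle_map_iff_of_injective w.toSubgraph.hom_injective, w.map_mapToSubgraph_hom]

theorem Subgraph.not_isAcyclic_coe_of_isCycle {K : H.Subgraph} {a : W} {w : H.Walk a a}
    (hw : w.IsCycle) (hK : w.edgeSet ⊆ K.edgeSet) : ¬ K.coe.IsAcyclic := fun hacyc ↦
  have hle : w.toSubgraph ≤ K := (Walk.toSubgraph_le_iff hw.not_nil).mpr hK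
  hw.not_isAcyclic_toSubgraph_coe <| hacyc.comap _ (Subgraph.inclusion.injective hle)

end SimpleGraph

section GraphDecomposition

variable {V W : Type*} {H : SimpleGraph W} {𝒱 : W → Set V}

theorem copart_adj {v : V} {a b : W} :
    (copart H 𝒱 v).Adj a b ↔ v ∈ 𝒱 a ∧ v ∈ 𝒱 b ∧ H.Adj a b := by
  simp [copart]

theorem exists_card_le_length_edgeSet_subset_iSup_copart
    (honest_adh : ∀ h₁ h₂ : W, H.Adj h₁ h₂ → (𝒱 h₁ ∩ 𝒱 h₂).Nonempty) {a b : W}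
    (w : H.Walk a b) :
    ∃ X : Finset V, X.card ≤ w.length ∧ w.edgeSet ⊆ (⨆ x ∈ X, copart H 𝒱 x).edgeSet := by
  classical
  choose f hf using fun d : H.Dart ↦ honest_adh d.fst d.snd d.adj
  refine ⟨(w.darts.map f).toFinset, ?_, ?_⟩
  · simpa using (w.darts.map f).toFinset_card_le
  · rintro _ he
    obtain ⟨d, hd, rfl⟩ := List.mem_map.mp (show _ ∈ w.edges from he)
    have hfd : f d ∈ (w.darts.map f).toFinset := by simpa using ⟨d, hd, rfl⟩
    exact Subgraph.edgeSet_mono (le_biSup (copart H 𝒱) hfd) <|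
      copart_adj.mpr ⟨(hf d).1, (hf d).2, d.adj⟩

end GraphDecomposition

theorem stmt16_general {V W : Type*} (H : SimpleGraph W) (𝒱 : W → Set V)
    (r : ℕ)
    (honest_adh : ∀ h₁ h₂ : W, H.Adj h₁ h₂ → (𝒱 h₁ ∩ 𝒱 h₂).Nonempty)
    (hacyc : ∀ X : Finset V, X.card ≤ r → (⨆ x ∈ X, copart H 𝒱 x).coe.IsAcyclic) :
    ∀ (a : W) (w : H.Walk a a), w.IsCycle → r < w.length := by
  intro a w hw
  by_contra! hlen
  obtain ⟨X, hX, hcover⟩ := exists_card_le_length_edgeSet_subset_iSup_copart honest_adh w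
  exact Subgraph.not_isAcyclic_coe_of_isCycle hw hcover (hacyc X (hX.trans hlen))

/-- an honest `r`-acyclic graph-decomposition of `G` over `H` with
`r ≥ 3` forces `H` to have girth greater than `r`. -/
theorem stmt16 {V W : Type*} (G : SimpleGraph V) (H : SimpleGraph W) (𝒱 : W → Set V)
    (r : ℕ) (hr : 3 ≤ r)
    (hH1v : ∀ v : V, ∃ h, v ∈ 𝒱 h)
    (hH1e : ∀ u v : V, G.Adj u v → ∃ h, u ∈ 𝒱 h ∧ v ∈ 𝒱 h)
    (hH2 : ∀ v : V, (copart H 𝒱 v).Connected)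
    (honest_bags : ∀ h : W, (𝒱 h).Nonempty)
    (honest_adh : ∀ h₁ h₂ : W, H.Adj h₁ h₂ → (𝒱 h₁ ∩ 𝒱 h₂).Nonempty)
    (hacyc : ∀ X : Finset V, X.card ≤ r → (⨆ x ∈ X, copart H 𝒱 x).coe.IsAcyclic) :
    ∀ (a : W) (w : H.Walk a a), w.IsCycle → r < w.length :=
  stmt16_general H 𝒱 r honest_adh hacyc
end

section
/- Let G be a finite graph and H a spanning subgraph of the intersection graph 𝐊(G) of maximal cliques of G such that H[K_G(v)] is acyclic for every vertex v of G (H is a 1-acyclic spanning subgraph). Then the total weight of H, i.e., ∑_{K₁K₂ ∈ E(H)} |K₁ ∩ K₂|, is at most W(G) := (∑_{K maximal clique of G} |K|) − |V(G)|. Moreover, equality holds if and only if H[K_G(v)] is connected for every vertex v of G. -/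
open SimpleGraph

/-- `s` is an (inclusion-)maximal clique of `G`. -/
def IsMaxClique {V : Type*} (G : SimpleGraph V) (s : Finset V) : Prop :=
  G.IsClique (↑s : Set V) ∧ ∀ t : Finset V, G.IsClique (↑t : Set V) → s ⊆ t → s = t

/-- The intersection graph `𝐊(G)` of the maximal cliques of `G`. -/
def cliqueIG {V : Type*} [DecidableEq V] (G : SimpleGraph V) :
    SimpleGraph {s : Finset V // IsMaxClique G s} where
  Adj K₁ K₂ := K₁ ≠ K₂ ∧ (K₁.1 ∩ K₂.1).Nonempty
  symm := ⟨by
    rintro K₁ K₂ ⟨h1, h2⟩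
    exact ⟨h1.symm, by rwa [Finset.inter_comm]⟩⟩
  loopless := ⟨fun K h => h.1 rfl⟩

/-- The weight of an edge of `𝐊(G)`: the size of the intersection of the two cliques. -/
def edgeWeight {V : Type*} [DecidableEq V] (G : SimpleGraph V) :
    Sym2 {s : Finset V // IsMaxClique G s} → ℕ :=
  Sym2.lift ⟨fun K₁ K₂ => (K₁.1 ∩ K₂.1).card, fun K₁ K₂ => by dsimp only; rw [Finset.inter_comm]⟩

/-! Count the weight of an edge `K₁K₂` of `H` vertex by vertex: `v` contributes to it exactly
when `K₁K₂` is an edge of `H[K_G(v)]`, so the total weight of `H` is `∑ᵥ |E(H[K_G(v)])|`, while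
`∑_K |K| = ∑ᵥ |K_G(v)|`. Each `H[K_G(v)]` is a forest on the nonempty set `K_G(v)`, hence has at
most `|K_G(v)| - 1` edges, with equality exactly when it is a tree. -/

open Finset

theorem Finset.sum_card_eq_sum_card_filter_mem {ι V : Type*} [Fintype ι] [Fintype V]
    [DecidableEq V] (s : ι → Finset V) :
    ∑ i, #(s i) = ∑ v, #{i | v ∈ s i} := by
  simpa [bipartiteAbove, bipartiteBelow] using
    sum_card_bipartiteAbove_eq_sum_card_bipartiteBelow (fun i v => v ∈ s i) (s := univ) (t := univ)

namespace SimpleGraph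

section Forest

variable {V : Type*} {G : SimpleGraph V}

lemma IsAcyclic.exists_isTree_ge [Nonempty V] (hG : G.IsAcyclic) :
    ∃ T : SimpleGraph V, G ≤ T ∧ T.IsTree := by
  obtain ⟨T, hGT, -, hT⟩ := connected_top.exists_isTree_le_of_le_of_isAcyclic le_top hG
  exact ⟨T, hGT, hT⟩

lemma IsAcyclic.natCard_edgeSet_add_one_le [Finite V] [Nonempty V] (hG : G.IsAcyclic) :
    Nat.card G.edgeSet + 1 ≤ Nat.card V := by
  obtain ⟨T, hGT, hT⟩ := hG.exists_isTree_ge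
  rw [← (isTree_iff_connected_and_card.1 hT).2]
  gcongr
  exact Nat.card_mono T.edgeSet.toFinite (edgeSet_mono hGT)

lemma IsAcyclic.natCard_edgeSet_add_one_eq_iff [Finite V] [Nonempty V] (hG : G.IsAcyclic) :
    Nat.card G.edgeSet + 1 = Nat.card V ↔ G.Connected := by
  refine ⟨fun h => ?_, fun h => (isTree_iff_connected_and_card.1 ⟨h, hG⟩).2⟩
  obtain ⟨T, hGT, hT⟩ := hG.exists_isTree_ge
  have hcard : T.edgeSet.ncard ≤ G.edgeSet.ncard := by
    simp only [← Nat.card_coe_set_eq]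
    linarith [(isTree_iff_connected_and_card.1 hT).2]
  have hGT_eq : G = T := edgeSet_injective <|
    Set.eq_of_subset_of_ncard_le (edgeSet_mono hGT) hcard T.edgeSet.toFinite
  exact hGT_eq ▸ hT.connected

end Forest

theorem sum_card_edgeFinset_induce {ι V : Type*} [Fintype ι] [DecidableEq ι] [Fintype V]
    (H : SimpleGraph ι) [DecidableRel H.Adj] (s : V → Set ι) [∀ v, DecidablePred (· ∈ s v)] :
    ∑ v, #(H.induce (s v)).edgeFinset = ∑ e ∈ H.edgeFinset, #{v | ∀ i ∈ e, i ∈ s v} := by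
  have hinduce (v : V) :
      #(H.induce (s v)).edgeFinset = #{e ∈ H.edgeFinset | ∀ i ∈ e, i ∈ s v} := by
    rw [← card_map, map_edgeFinset_induce, ← filter_mem_eq_inter]
    simp [mem_sym2_iff]
  simp_rw [hinduce]
  exact sum_card_bipartiteAbove_eq_sum_card_bipartiteBelow _

end SimpleGraph

section MaxClique

variable {V : Type*} {G : SimpleGraph V}

lemma exists_isMaxClique_superset [Finite V] {s : Finset V} (hs : G.IsClique (s : Set V)) :
    ∃ t, s ⊆ t ∧ IsMaxClique G t := by
  obtain ⟨t, hst, ht⟩ := Finite.exists_le_maximal (p := fun t : Finset V => G.IsClique ↑t) hs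
  exact ⟨t, hst, ht.prop, fun u hu htu => le_antisymm htu (ht.le_of_ge hu htu)⟩

open Classical in
lemma edgeWeight_eq_card_filter [Fintype V] [DecidableEq V]
    (e : Sym2 {s : Finset V // IsMaxClique G s}) :
    edgeWeight G e = #{v | ∀ K ∈ e, v ∈ K.1} := by
  induction e with
  | h K₁ K₂ => simp [edgeWeight, filter_and]

end MaxClique

theorem stmt18_general {V : Type} [Fintype V] [DecidableEq V] (G : SimpleGraph V)
    (H : SimpleGraph {s : Finset V // IsMaxClique G s})
    (h1 : ∀ v : V, (H.induce {K | v ∈ K.1}).IsAcyclic) :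
    (∑ e ∈ H.edgeSet.toFinite.toFinset, edgeWeight G e) ≤
      (∑ K ∈ {s : Finset V | IsMaxClique G s}.toFinite.toFinset, K.card)
        - Fintype.card V ∧
    ((∑ e ∈ H.edgeSet.toFinite.toFinset, edgeWeight G e) =
      (∑ K ∈ {s : Finset V | IsMaxClique G s}.toFinite.toFinset, K.card)
        - Fintype.card V ↔
      ∀ v : V, (H.induce {K | v ∈ K.1}).Connected) := by
  classical
  have hweight : ∑ e ∈ H.edgeSet.toFinite.toFinset, edgeWeight G e =
      ∑ v, Nat.card (H.induce {K | v ∈ K.1}).edgeSet := by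
    simp_rw [Set.Finite.toFinset_eq_toFinset, edgeWeight_eq_card_filter, Nat.card_eq_fintype_card,
      ← edgeFinset_card]
    convert (sum_card_edgeFinset_induce H fun v => {K | v ∈ K.1}).symm using 3
    · exact Set.toFinset_congr rfl
    · rfl
  have hsize : ∑ K ∈ {s : Finset V | IsMaxClique G s}.toFinite.toFinset, K.card =
      ∑ v, Nat.card {K : {s : Finset V // IsMaxClique G s} | v ∈ K.1} := by
    rw [sum_subtype _ (p := IsMaxClique G) (by simp) card,
      sum_card_eq_sum_card_filter_mem Subtype.val]
    simp [Nat.card_eq_fintype_card, Fintype.card_subtype]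
  have (v : V) : Nonempty {K : {s : Finset V // IsMaxClique G s} | v ∈ K.1} := by
    obtain ⟨t, hvt, ht⟩ := exists_isMaxClique_superset (G := G) (s := {v}) (by simp)
    exact ⟨⟨⟨t, ht⟩, hvt (mem_singleton_self v)⟩⟩
  have hforest (v : V) := (h1 v).natCard_edgeSet_add_one_le
  have hsucc : ∑ v, (Nat.card (H.induce {K | v ∈ K.1}).edgeSet + 1) =
      ∑ v, Nat.card (H.induce {K | v ∈ K.1}).edgeSet + Fintype.card V := by
    simp [sum_add_distrib]
  have hle := sum_le_sum fun v (_ : v ∈ univ) => hforest v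
  rw [hweight, hsize]
  refine ⟨by omega, ?_⟩
  rw [eq_tsub_iff_add_eq_of_le (by omega), ← hsucc, sum_eq_sum_iff_of_le fun v _ => hforest v]
  simpa only [mem_univ, true_imp_iff] using
    forall_congr' fun v => (h1 v).natCard_edgeSet_add_one_eq_iff

/-- for a 1-acyclic spanning subgraph `H` of `𝐊(G)`, the total weight of
`H` is at most `W(G) = (∑_{K maximal clique} |K|) - |V(G)|`, with equality iff all the
induced subgraphs `H[K_G(v)]` are connected. -/
theorem stmt18 {V : Type} [Fintype V] [DecidableEq V] (G : SimpleGraph V)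
    (H : SimpleGraph {s : Finset V // IsMaxClique G s}) (hH : H ≤ cliqueIG G)
    (h1 : ∀ v : V, (H.induce {K | v ∈ K.1}).IsAcyclic) :
    (∑ e ∈ H.edgeSet.toFinite.toFinset, edgeWeight G e) ≤
      (∑ K ∈ {s : Finset V | IsMaxClique G s}.toFinite.toFinset, K.card)
        - Fintype.card V ∧
    ((∑ e ∈ H.edgeSet.toFinite.toFinset, edgeWeight G e) =
      (∑ K ∈ {s : Finset V | IsMaxClique G s}.toFinite.toFinset, K.card)
        - Fintype.card V ↔
      ∀ v : V, (H.induce {K | v ∈ K.1}).Connected) :=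
  stmt18_general G H h1
end
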